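/- arXiv:2409.10295 — 11 statements merged into one kernel-verified Lean document; each statement's English description precedes it below -/
import Mathlib

section
/- Let [l,u] be a hyperrectangle with θ̲ ≤ l ≤ u ≤ θ̄ componentwise. Then the convex hull of the image F([l,u]) of [l,u] under the folding operator equals the polytope of all vectors ψ' = (ψ'_{ij}) such that (a) F_{ij}(l) ≤ ψ'_{ij} ≤ F_{ij}(u) for all i ∈ [I] and j ∈ [J_i], and (b) for all i ∈ [I] and j ∈ [J_i] with l_i < z_{ij} < u_i, (ψ'_{ij} − F_{ij}(l)) · (F_{i,j+1}(u) − F_{i,j+1}(l)) ≥ (ψ'_{i,j+1} − F_{i,j+1}(l)) · (F_{ij}(u) − F_{ij}(l)). -/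
/-!
The folding operator acts coordinatewise and the convex hull of a product is the product of the
convex hulls, so it suffices to treat a single coordinate. There `t ↦ F(t)` traces a monotone
path through the breakpoints; its vertices are the folds of the breakpoints clamped to `[l, u]`,
whose first `k` components equal those of `F(u)` and the rest those of `F(l)`. A point `ψ` of the
polytope is `F(l) + (F(u) - F(l)) * r` for the vector `r` of its filling ratios, and the
cross-multiplied constraints say exactly that `r` is antitone. An antitone vector in `[0, 1]^J`
is a convex combination of the staircases `(1, …, 1, 0, …, 0)` with telescoping weights, and the
affine map `r ↦ F(l) + (F(u) - F(l)) * r` sends the staircases to the vertices.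
-/

/-- The folding operator: `fold I J z θ i j` is the `j`-th (0-based) folded component
of coordinate `i`, i.e. `F_{i,j+1}(θ) = min(max(θ_i − z_{i,j}, 0), z_{i,j+1} − z_{i,j})`
in the paper's 1-based indexing. -/
noncomputable def fold (I : ℕ) (J : Fin I → ℕ) (z : (i : Fin I) → ℕ → ℝ)
    (θ : Fin I → ℝ) : (i : Fin I) → Fin (J i) → ℝ :=
  fun i j => min (max (θ i - z i j.val) 0) (z i (j.val + 1) - z i j.val)

open Set

def staircase (n k : ℕ) : Fin n → ℝ := fun j => if (j : ℕ) < k then 1 else 0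

theorem mem_convexHull_staircase {n : ℕ} {e : ℕ → ℝ} (he : Antitone e) (he₀ : e 0 ≤ 1)
    (hen : e n = 0) : (fun j : Fin n => e j) ∈ convexHull ℝ (staircase n '' Iic n) := by
  -- `e` padded with `s 0 = 1`; the weight of `staircase n k` is the drop `s k - s (k + 1)`.
  set s : ℕ → ℝ := fun k => if k = 0 then 1 else e (k - 1)
  have hs_succ (k : ℕ) : s (k + 1) = e k := by simp [s]
  have hs_anti : Antitone s := antitone_nat_of_succ_le fun k => by
    rcases k with _ | k
    · simpa [s] using he₀
    · simpa [s] using he k.le_succ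
  have htele (m : ℕ) : ∑ k ∈ Finset.range m, (s k - s (k + 1)) = 1 - s m := by
    rw [Finset.sum_range_sub']
    rfl
  have hsum : ∑ k ∈ Finset.range (n + 1), (s k - s (k + 1)) = 1 := by
    rw [htele, hs_succ, hen, sub_zero]
  have hcomb : (fun j : Fin n => e j) =
      ∑ k ∈ Finset.range (n + 1), (s k - s (k + 1)) • staircase n k := by
    funext j
    have hj : (j : ℕ) + 1 ≤ n + 1 := by omega
    simp only [Finset.sum_apply, Pi.smul_apply, smul_eq_mul, staircase, mul_ite, mul_one,
      mul_zero, ← Finset.sum_filter]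
    have hfilter :
        {k ∈ Finset.range (n + 1) | (j : ℕ) < k} = Finset.Ico ((j : ℕ) + 1) (n + 1) := by
      ext k; simp only [Finset.mem_filter, Finset.mem_range, Finset.mem_Ico]; omega
    rw [hfilter, Finset.sum_Ico_eq_sub _ hj, htele, htele, hs_succ, hs_succ, hen]
    ring
  rw [hcomb]
  exact (convex_convexHull ℝ _).sum_mem (fun k _ => sub_nonneg.2 (hs_anti k.le_succ)) hsum
    fun k hk => subset_convexHull ℝ _ ⟨k, Nat.lt_succ_iff.1 (Finset.mem_range.1 hk), rfl⟩

noncomputable def foldCoord (J : ℕ) (z : ℕ → ℝ) (t : ℝ) : Fin J → ℝ :=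
  fun j => min (max (t - z j) 0) (z (j + 1) - z j)

namespace foldCoord

variable {J : ℕ} {z : ℕ → ℝ}

theorem apply_eq_min_max (t : ℝ) (j : Fin J) :
    foldCoord J z t j = min (max t (z j)) (z (j + 1)) - z j := by
  rw [foldCoord, ← sub_self (z j), max_sub_sub_right, min_sub_sub_right]

theorem mono : Monotone (foldCoord J z) := fun _ _ h j => by
  simp only [apply_eq_min_max]
  gcongr

theorem apply_of_le {t : ℝ} {j : Fin J} (hj : z j ≤ z (j + 1)) (ht : t ≤ z j) :
    foldCoord J z t j = 0 := by
  rw [apply_eq_min_max, max_eq_right ht, min_eq_left hj, sub_self]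

theorem apply_of_ge {t : ℝ} {j : Fin J} (hj : z j ≤ z (j + 1)) (ht : z (j + 1) ≤ t) :
    foldCoord J z t j = z (j + 1) - z j := by
  rw [apply_eq_min_max, max_eq_left (hj.trans ht), min_eq_right ht]

theorem sub_pos {l u : ℝ} {j : Fin J} (hj : z j < z (j + 1)) (hl : l < z (j + 1))
    (hu : z j < u) (hlu : l < u) : 0 < foldCoord J z u j - foldCoord J z l j := by
  rw [apply_eq_min_max, apply_eq_min_max, min_eq_left (max_le hl.le hj.le),
    sub_sub_sub_cancel_right, _root_.sub_pos]
  exact lt_min (max_lt (lt_max_of_lt_left hlu) (lt_max_of_lt_left hu)) (max_lt hl hj)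

theorem apply_clamp_breakpoint {l u : ℝ} (hz : MonotoneOn z (Iic J))
    (hlu : l ≤ u) {k : ℕ} (hk : k ≤ J) (j : Fin J) :
    foldCoord J z (min (max (z k) l) u) j =
      if (j : ℕ) < k then foldCoord J z u j else foldCoord J z l j := by
  have hj : z j ≤ z (j + 1) := hz (mem_Iic.2 j.2.le) (mem_Iic.2 j.2) (Nat.le_succ _)
  split_ifs with hjk
  · have hzk : z (j + 1) ≤ z k := hz (mem_Iic.2 j.2) (mem_Iic.2 hk) hjk
    rcases le_total u (z (j + 1)) with h | h
    · rw [min_eq_right (h.trans (hzk.trans (le_max_left _ _)))]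
    · rw [apply_of_ge hj h, apply_of_ge hj (le_min (hzk.trans (le_max_left _ _)) h)]
  · have hzk : z k ≤ z j := hz (mem_Iic.2 hk) (mem_Iic.2 j.2.le) (not_lt.1 hjk)
    rcases le_total (z j) l with h | h
    · rw [max_eq_right (hzk.trans h), min_eq_left hlu]
    · rw [apply_of_le hj h, apply_of_le hj ((min_le_left _ _).trans (max_le hzk h))]

end foldCoord

def foldPolytope (J : ℕ) (z : ℕ → ℝ) (l u : ℝ) : Set (Fin J → ℝ) :=
  {ψ | (∀ j, foldCoord J z l j ≤ ψ j ∧ ψ j ≤ foldCoord J z u j) ∧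
    ∀ (j : Fin J) (h : j.val + 1 < J), l < z (j.val + 1) → z (j.val + 1) < u →
      (ψ j - foldCoord J z l j) *
          (foldCoord J z u ⟨j.val + 1, h⟩ - foldCoord J z l ⟨j.val + 1, h⟩) ≥
        (ψ ⟨j.val + 1, h⟩ - foldCoord J z l ⟨j.val + 1, h⟩) *
          (foldCoord J z u j - foldCoord J z l j)}

-- The fraction of segment `k` filled by `ψ`. Segments outside `(l, u)` are declared full or
-- empty outright: the ratio could be `0 / 0` there, and this choice keeps it antitone.
noncomputable def fillRatio (J : ℕ) (z : ℕ → ℝ) (l u : ℝ) (ψ : Fin J → ℝ)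
    (k : ℕ) : ℝ :=
  if hk : k < J then
    if z (k + 1) ≤ l then 1
    else if u ≤ z k then 0
    else (ψ ⟨k, hk⟩ - foldCoord J z l ⟨k, hk⟩) /
      (foldCoord J z u ⟨k, hk⟩ - foldCoord J z l ⟨k, hk⟩)
  else 0

namespace fillRatio

variable {J : ℕ} {z : ℕ → ℝ} {l u : ℝ} {ψ : Fin J → ℝ}

theorem nonneg (hlu : l ≤ u) (hψ : ψ ∈ foldPolytope J z l u) (k : ℕ) :
    0 ≤ fillRatio J z l u ψ k := by
  unfold fillRatio
  split_ifs
  · exact zero_le_one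
  · exact le_rfl
  · exact div_nonneg (sub_nonneg.2 (hψ.1 _).1) (sub_nonneg.2 (foldCoord.mono hlu _))
  · exact le_rfl

theorem le_one (hlu : l ≤ u) (hψ : ψ ∈ foldPolytope J z l u) (k : ℕ) :
    fillRatio J z l u ψ k ≤ 1 := by
  unfold fillRatio
  split_ifs
  · exact le_rfl
  · exact zero_le_one
  · exact div_le_one_of_le₀ (sub_le_sub_right (hψ.1 _).2 _)
      (sub_nonneg.2 (foldCoord.mono hlu _))
  · exact zero_le_one

theorem antitone (hz : ∀ j, j < J → z j < z (j + 1)) (hlu : l ≤ u)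
    (hψ : ψ ∈ foldPolytope J z l u) : Antitone (fillRatio J z l u ψ) := by
  refine antitone_nat_of_succ_le fun k => ?_
  by_cases hk : k + 1 < J
  swap
  · rw [fillRatio, dif_neg hk]
    exact nonneg hlu hψ k
  have hk' : k < J := Nat.lt_of_succ_lt hk
  by_cases hl : z (k + 1) ≤ l
  · have hfull : fillRatio J z l u ψ k = 1 := by simp [fillRatio, hk', hl]
    exact hfull ▸ le_one hlu hψ _
  by_cases hu : u ≤ z (k + 1)
  · have hempty : fillRatio J z l u ψ (k + 1) = 0 := by
      simp [fillRatio, hk, hu, (not_le.1 hl).trans (hz _ hk)]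
    exact hempty ▸ nonneg hlu hψ _
  rw [not_le] at hl hu
  rw [fillRatio, fillRatio, dif_pos hk, dif_pos hk', if_neg (hl.trans (hz _ hk)).not_ge,
    if_neg hu.not_ge, if_neg hl.not_ge, if_neg ((hz k hk').trans hu).not_ge,
    div_le_div_iff₀ (foldCoord.sub_pos (hz _ hk) (hl.trans (hz _ hk)) hu (hl.trans hu))
      (foldCoord.sub_pos (hz k hk') hl ((hz k hk').trans hu) (hl.trans hu))]
  exact hψ.2 ⟨k, hk'⟩ hk hl hu

theorem sub_eq_mul (hz : ∀ j, j < J → z j < z (j + 1)) (hlu : l ≤ u)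
    (hψ : ψ ∈ foldPolytope J z l u) (j : Fin J) :
    ψ j - foldCoord J z l j =
      (foldCoord J z u j - foldCoord J z l j) * fillRatio J z l u ψ j := by
  have hj : z j ≤ z (j + 1) := (hz j j.2).le
  obtain ⟨hlψ, hψu⟩ := hψ.1 j
  rw [fillRatio, dif_pos j.2]
  split_ifs with hl hu
  · rw [foldCoord.apply_of_ge hj hl, foldCoord.apply_of_ge hj (hl.trans hlu)] at *
    linarith
  · rw [foldCoord.apply_of_le hj hu, foldCoord.apply_of_le hj (hlu.trans hu)] at *
    linarith
  · rcases (sub_nonneg.2 (foldCoord.mono hlu j)).eq_or_lt with h | h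
    · rw [← h, zero_mul]
      linarith
    · exact (mul_div_cancel₀ _ h.ne').symm

end fillRatio

section foldPolytope

variable {J : ℕ} {z : ℕ → ℝ} {l u : ℝ}

theorem convex_foldPolytope : Convex ℝ (foldPolytope J z l u) := by
  rintro ψ₁ ⟨hb₁, hc₁⟩ ψ₂ ⟨hb₂, hc₂⟩ a b ha hb hab
  simp only [foldPolytope, mem_ofPred_eq, Pi.add_apply, Pi.smul_apply, smul_eq_mul]
  refine ⟨fun j => ⟨?_, ?_⟩, fun j h hl hu => ?_⟩
  · linear_combination a * (hb₁ j).1 + b * (hb₂ j).1 - foldCoord J z l j * hab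
  · linear_combination a * (hb₁ j).2 + b * (hb₂ j).2 + foldCoord J z u j * hab
  · linear_combination a * hc₁ j h hl hu + b * hc₂ j h hl hu +
      (foldCoord J z l ⟨j + 1, h⟩ * (foldCoord J z u j - foldCoord J z l j) -
        foldCoord J z l j * (foldCoord J z u ⟨j + 1, h⟩ - foldCoord J z l ⟨j + 1, h⟩)) * hab

theorem image_foldCoord_subset_foldPolytope (hz : ∀ j, j < J → z j < z (j + 1)) :
    foldCoord J z '' Icc l u ⊆ foldPolytope J z l u := by
  rintro _ ⟨t, ⟨hlt, htu⟩, rfl⟩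
  refine ⟨fun j => ⟨foldCoord.mono hlt j, foldCoord.mono htu j⟩, fun j h hl hu => ?_⟩
  have hj : z j ≤ z (j + 1) := (hz j j.2).le
  have hj' : z (j + 1) ≤ z (j + 1 + 1) := (hz _ h).le
  rcases le_total t (z (j + 1)) with ht | ht
  · rw [(foldCoord.apply_of_le (j := ⟨j + 1, h⟩) hj' ht).trans
      (foldCoord.apply_of_le (j := ⟨j + 1, h⟩) hj' hl.le).symm, sub_self, zero_mul]
    exact mul_nonneg (sub_nonneg.2 (foldCoord.mono hlt j))
      (sub_nonneg.2 (foldCoord.mono (hlt.trans htu) _))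
  · rw [(foldCoord.apply_of_ge hj ht).trans (foldCoord.apply_of_ge hj hu.le).symm, ge_iff_le,
      mul_comm (foldCoord J z u j - _)]
    exact mul_le_mul_of_nonneg_right (sub_le_sub_right (foldCoord.mono htu _) _)
      (sub_nonneg.2 (foldCoord.mono (hlt.trans htu) j))

theorem foldPolytope_subset_convexHull (hz : ∀ j, j < J → z j < z (j + 1)) (hlu : l ≤ u) :
    foldPolytope J z l u ⊆ convexHull ℝ (foldCoord J z '' Icc l u) := by
  intro ψ hψ
  -- `A` maps `staircase J k` to the fold of the breakpoint `z k` clamped to `[l, u]`.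
  let A : (Fin J → ℝ) →ᵃ[ℝ] (Fin J → ℝ) :=
    (LinearMap.mulLeft ℝ (foldCoord J z u - foldCoord J z l)).toAffineMap +
      AffineMap.const ℝ _ (foldCoord J z l)
  have hA (r : Fin J → ℝ) (j : Fin J) :
      A r j = foldCoord J z l j + (foldCoord J z u j - foldCoord J z l j) * r j := by
    simp [A, add_comm]
  have hψA : A (fun j : Fin J => fillRatio J z l u ψ j) = ψ := funext fun j => by
    rw [hA, ← fillRatio.sub_eq_mul hz hlu hψ, add_sub_cancel]
  have hmono : MonotoneOn z (Iic J) :=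
    (strictMonoOn_Iic_of_lt_succ fun m hm => by simpa using hz m hm).monotoneOn
  have hvert : A '' (staircase J '' Iic J) ⊆ foldCoord J z '' Icc l u := by
    rintro _ ⟨_, ⟨k, hk, rfl⟩, rfl⟩
    refine ⟨min (max (z k) l) u, ⟨le_min (le_max_right _ _) hlu, min_le_right _ _⟩,
      funext fun j => ?_⟩
    rw [foldCoord.apply_clamp_breakpoint hmono hlu hk, hA, staircase]
    split_ifs <;> ring
  have hratio := mem_convexHull_staircase (fillRatio.antitone hz hlu hψ)
    (fillRatio.le_one hlu hψ 0) (by simp [fillRatio] : fillRatio J z l u ψ J = 0)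
  rw [← hψA]
  exact convexHull_mono hvert (A.image_convexHull _ ▸ mem_image_of_mem A hratio)

theorem convexHull_image_foldCoord (hz : ∀ j, j < J → z j < z (j + 1)) (hlu : l ≤ u) :
    convexHull ℝ (foldCoord J z '' Icc l u) = foldPolytope J z l u :=
  (convexHull_min (image_foldCoord_subset_foldPolytope hz) convex_foldPolytope).antisymm
    (foldPolytope_subset_convexHull hz hlu)

end foldPolytope

theorem stmt_0_general (I : ℕ) (J : Fin I → ℕ)
    (z : (i : Fin I) → ℕ → ℝ)
    (hz : ∀ i, ∀ j, j < J i → z i j < z i (j + 1))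
    (l u : Fin I → ℝ)
    (hlu : l ≤ u) :
    convexHull ℝ (fold I J z '' Set.Icc l u) =
      {ψ : (i : Fin I) → Fin (J i) → ℝ |
        (∀ i j, fold I J z l i j ≤ ψ i j ∧ ψ i j ≤ fold I J z u i j) ∧
        ∀ (i : Fin I) (j : Fin (J i)) (h : j.val + 1 < J i),
          l i < z i (j.val + 1) → z i (j.val + 1) < u i →
          (ψ i j - fold I J z l i j) *
              (fold I J z u i ⟨j.val + 1, h⟩ - fold I J z l i ⟨j.val + 1, h⟩) ≥
            (ψ i ⟨j.val + 1, h⟩ - fold I J z l i ⟨j.val + 1, h⟩) *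
              (fold I J z u i j - fold I J z l i j)} := by
  have himage : fold I J z '' Icc l u =
      univ.pi fun i => foldCoord (J i) (z i) '' Icc (l i) (u i) := by
    rw [← pi_univ_Icc, ← piMap_image_univ_pi]
    rfl
  rw [himage, convexHull_pi]
  simp_rw [convexHull_image_foldCoord (hz _) (hlu _)]
  ext ψ
  simp only [mem_pi, mem_univ, forall_const, foldPolytope, mem_ofPred_eq, forall_and]
  rfl

/-- The convex hull of the folded hyperrectangle `[l,u] ⊆ [θ̲,θ̄]` equals the polytope
described by the bound constraints and the cross-multiplied monotonicity constraints. -/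
theorem stmt_0 (I : ℕ) (J : Fin I → ℕ) (hJ : ∀ i, 1 ≤ J i)
    (z : (i : Fin I) → ℕ → ℝ)
    (hz : ∀ i, ∀ j, j < J i → z i j < z i (j + 1))
    (l u : Fin I → ℝ)
    (hl : ∀ i, z i 0 ≤ l i) (hlu : l ≤ u) (hu : ∀ i, u i ≤ z i (J i)) :
    convexHull ℝ (fold I J z '' Set.Icc l u) =
      {ψ : (i : Fin I) → Fin (J i) → ℝ |
        (∀ i j, fold I J z l i j ≤ ψ i j ∧ ψ i j ≤ fold I J z u i j) ∧
        ∀ (i : Fin I) (j : Fin (J i)) (h : j.val + 1 < J i),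
          l i < z i (j.val + 1) → z i (j.val + 1) < u i →
          (ψ i j - fold I J z l i j) *
              (fold I J z u i ⟨j.val + 1, h⟩ - fold I J z l i ⟨j.val + 1, h⟩) ≥
            (ψ i ⟨j.val + 1, h⟩ - fold I J z l i ⟨j.val + 1, h⟩) *
              (fold I J z u i j - fold I J z l i j)} :=
  stmt_0_general I J z hz l u hlu
end

section
/- Let [z⁻,z⁺] be a grid rectangle and let ψ' satisfy F⁺(ψ') ∈ [θ̲,θ̄] and 0 ≤ ψ'_{ij} ≤ z_{ij} − z_{i,j−1} for all i ∈ [I], j ∈ [J_i], together with the cross-multiplied monotonicity inequalities describing conv(F([θ̲,θ̄])) (namely (ψ'_{ij} − F_{ij}(θ̲))(F_{i,j+1}(θ̄) − F_{i,j+1}(θ̲)) ≥ (ψ'_{i,j+1} − F_{i,j+1}(θ̲))(F_{ij}(θ̄) − F_{ij}(θ̲)) whenever θ̲_i < z_{ij} < θ̄_i). Then d(F⁺(ψ'), [z⁻,z⁺]) ≤ d'(ψ', [z⁻,z⁺]). -/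
/-- The retraction `F⁺`. -/
noncomputable def retr (I : ℕ) (J : Fin I → ℕ) (z : (i : Fin I) → ℕ → ℝ)
    (ψ : (i : Fin I) → Fin (J i) → ℝ) : Fin I → ℝ :=
  fun i => z i 0 + ∑ j, ψ i j

/-- ℓ1-distance from a point to the box `[zm, zp]`. -/
noncomputable def l1dist (I : ℕ) (θ zm zp : Fin I → ℝ) : ℝ :=
  sInf ((fun θ' => ∑ i, |θ i - θ' i|) '' Set.Icc zm zp)

/-- The linear distance `d'(ψ', [z⁻, z⁺])`. -/
noncomputable def dlin (I : ℕ) (J : Fin I → ℕ) (z : (i : Fin I) → ℕ → ℝ)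
    (ψ : (i : Fin I) → Fin (J i) → ℝ) (zm zp : Fin I → ℝ) : ℝ :=
  ∑ i, ((∑ j ∈ Finset.univ.filter (fun j : Fin (J i) => zp i < z i (j.val + 1)), ψ i j)
    + zm i - z i 0
    - ∑ j ∈ Finset.univ.filter (fun j : Fin (J i) => z i (j.val + 1) ≤ zm i), ψ i j)

open Finset

lemma sum_filter_val_lt_le_sub {M : Type*} [AddCommGroup M] [PartialOrder M]
    [IsOrderedAddMonoid M] {n k : ℕ} (hk : k ≤ n) (z : ℕ → M) (ψ : Fin n → M)
    (hψ : ∀ j, ψ j ≤ z (j.val + 1) - z j.val) :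
    ∑ j ∈ univ.filter (fun j : Fin n => j.val < k), ψ j ≤ z k - z 0 := by
  have hrange : (univ.filter (fun j : Fin n => j.val < k)).map Fin.valEmbedding = range k := by
    ext m
    simp only [mem_map, mem_filter, mem_univ, true_and, Fin.valEmbedding_apply, mem_range]
    exact ⟨fun ⟨j, hj, hjm⟩ => hjm ▸ hj, fun hm => ⟨⟨m, by omega⟩, hm, rfl⟩⟩
  calc ∑ j ∈ univ.filter (fun j : Fin n => j.val < k), ψ j
      ≤ ∑ j ∈ univ.filter (fun j : Fin n => j.val < k), (z (j.val + 1) - z j.val) :=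
        sum_le_sum fun j _ => hψ j
    _ = ∑ m ∈ range k, (z (m + 1) - z m) := by
        rw [← hrange, sum_map]; rfl
    _ = z k - z 0 := sum_range_sub z k

lemma abs_sub_max_min_le {α : Type*} [AddCommGroup α] [LinearOrder α] [IsOrderedAddMonoid α]
    {a b x d : α} (hd : 0 ≤ d) (ha : a - x ≤ d) (hb : x - b ≤ d) :
    |x - max a (min b x)| ≤ d := by
  rw [abs_le]; constructor <;> grind

lemma filter_lt_apply_succ_eq {α : Type*} [LinearOrder α] {z : ℕ → α} {n k : ℕ}
    (hz : StrictMonoOn z (Set.Iic n)) (hk : k ≤ n) :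
    univ.filter (fun j : Fin n => z k < z (j.val + 1)) =
      univ.filter (fun j : Fin n => ¬ j.val < k) := by
  refine filter_congr fun j _ => ?_
  rw [hz.lt_iff_lt hk (show j.val + 1 ≤ n from j.isLt)]
  omega

lemma filter_apply_succ_le_eq {α : Type*} [LinearOrder α] {z : ℕ → α} {n k : ℕ}
    (hz : StrictMonoOn z (Set.Iic n)) (hk : k ≤ n) :
    univ.filter (fun j : Fin n => z (j.val + 1) ≤ z k) =
      univ.filter (fun j : Fin n => j.val < k) := by
  refine filter_congr fun j _ => ?_
  rw [hz.le_iff_le (show j.val + 1 ≤ n from j.isLt) hk]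
  omega

lemma l1dist_le_of_mem {I : ℕ} {θ θ' zm zp : Fin I → ℝ} (hθ' : θ' ∈ Set.Icc zm zp) :
    l1dist I θ zm zp ≤ ∑ i, |θ i - θ' i| :=
  csInf_le ⟨0, by rintro _ ⟨_, _, rfl⟩; positivity⟩ ⟨θ', hθ', rfl⟩

lemma abs_sub_clamp_le_of_increments {n : ℕ} {z : ℕ → ℝ} (hz : ∀ j < n, z j < z (j + 1))
    {a b : ℝ} (ha : ∃ k ≤ n, a = z k) (hb : ∃ k ≤ n, b = z k) {ψ : Fin n → ℝ}
    (hψ : ∀ j, 0 ≤ ψ j ∧ ψ j ≤ z (j.val + 1) - z j.val) :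
    |(z 0 + ∑ j, ψ j) - max a (min b (z 0 + ∑ j, ψ j))| ≤
      (∑ j ∈ univ.filter (fun j : Fin n => b < z (j.val + 1)), ψ j) + a - z 0
        - ∑ j ∈ univ.filter (fun j : Fin n => z (j.val + 1) ≤ a), ψ j := by
  obtain ⟨m, hm, rfl⟩ := ha
  obtain ⟨p, hp, rfl⟩ := hb
  have hmono : StrictMonoOn z (Set.Iic n) :=
    strictMonoOn_Iic_of_lt_succ fun j hj => by simpa [Order.succ_eq_add_one] using hz j hj
  rw [filter_lt_apply_succ_eq hmono hp, filter_apply_succ_le_eq hmono hm]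
  have hsplit (k : ℕ) := sum_filter_add_sum_filter_not univ (fun j : Fin n => j.val < k) ψ
  have hhead (k : ℕ) (hk : k ≤ n) := sum_filter_val_lt_le_sub hk z ψ fun j => (hψ j).2
  have htail (k : ℕ) : 0 ≤ ∑ j ∈ univ.filter (fun j : Fin n => ¬ j.val < k), ψ j :=
    sum_nonneg fun j _ => (hψ j).1
  apply abs_sub_max_min_le
  · linarith [hhead m hm, htail p]
  · linarith [hsplit m, hsplit p, hhead m hm, htail m, htail p]
  · linarith [hsplit m, hsplit p, hhead m hm, hhead p hp]

theorem stmt_1_general (I : ℕ) (J : Fin I → ℕ)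
    (z : (i : Fin I) → ℕ → ℝ)
    (hz : ∀ i, ∀ j, j < J i → z i j < z i (j + 1))
    -- grid rectangle [zm, zp]
    (zm zp : Fin I → ℝ) (hmp : zm ≤ zp)
    (hzm : ∀ i, ∃ k ≤ J i, zm i = z i k) (hzp : ∀ i, ∃ k ≤ J i, zp i = z i k)
    -- assumptions on ψ'
    (ψ : (i : Fin I) → Fin (J i) → ℝ)
    (hbound : ∀ i j, 0 ≤ ψ i j ∧ ψ i j ≤ z i (j.val + 1) - z i j.val) :
    l1dist I (retr I J z ψ) zm zp ≤ dlin I J z ψ zm zp := by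
  let θ' : Fin I → ℝ := fun i => max (zm i) (min (zp i) (retr I J z ψ i))
  have hθ' : θ' ∈ Set.Icc zm zp :=
    ⟨fun i => le_max_left _ _, fun i => max_le (hmp i) (min_le_left _ _)⟩
  calc l1dist I (retr I J z ψ) zm zp ≤ ∑ i, |retr I J z ψ i - θ' i| := l1dist_le_of_mem hθ'
    _ ≤ dlin I J z ψ zm zp :=
      sum_le_sum fun i _ => abs_sub_clamp_le_of_increments (hz i) (hzm i) (hzp i) (hbound i)

theorem stmt_1 (I : ℕ) (J : Fin I → ℕ) (hJ : ∀ i, 1 ≤ J i)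
    (z : (i : Fin I) → ℕ → ℝ)
    (hz : ∀ i, ∀ j, j < J i → z i j < z i (j + 1))
    -- grid rectangle [zm, zp]
    (zm zp : Fin I → ℝ) (hmp : zm ≤ zp)
    (hzm : ∀ i, ∃ k ≤ J i, zm i = z i k) (hzp : ∀ i, ∃ k ≤ J i, zp i = z i k)
    -- assumptions on ψ'
    (ψ : (i : Fin I) → Fin (J i) → ℝ)
    (hretr : ∀ i, z i 0 ≤ retr I J z ψ i ∧ retr I J z ψ i ≤ z i (J i))
    (hbound : ∀ i j, 0 ≤ ψ i j ∧ ψ i j ≤ z i (j.val + 1) - z i j.val)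
    (hcross : ∀ (i : Fin I) (j : Fin (J i)) (h : j.val + 1 < J i),
      z i 0 < z i (j.val + 1) → z i (j.val + 1) < z i (J i) →
      (ψ i j - fold I J z (fun i' => z i' 0) i j) *
          (fold I J z (fun i' => z i' (J i')) i ⟨j.val + 1, h⟩ -
            fold I J z (fun i' => z i' 0) i ⟨j.val + 1, h⟩) ≥
        (ψ i ⟨j.val + 1, h⟩ - fold I J z (fun i' => z i' 0) i ⟨j.val + 1, h⟩) *
          (fold I J z (fun i' => z i' (J i')) i j - fold I J z (fun i' => z i' 0) i j)) :
    l1dist I (retr I J z ψ) zm zp ≤ dlin I J z ψ zm zp :=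
  stmt_1_general I J z hz zm zp hmp hzm hzp ψ hbound
end

section
/- For every θ ∈ ℝ^I with θ̲ ≤ θ ≤ θ̄ and every grid rectangle [z⁻,z⁺], the linear distance of the folded point equals the ℓ1-distance of the original point: d'(F(θ), [z⁻,z⁺]) = d(θ, [z⁻,z⁺]). -/
/-!
Each folded coordinate is a difference `min θᵢ z_{ij} - min θᵢ z_{i,j-1}`, so the two sums in
`d'` telescope: since the breakpoints increase, the filters select exactly the indices above
`z⁺ᵢ` and below `z⁻ᵢ`. Coordinatewise `d'` becomes `(θᵢ - z⁺ᵢ)⁺ + (z⁻ᵢ - θᵢ)⁺`, which is the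
distance from `θᵢ` to `[z⁻ᵢ, z⁺ᵢ]`; the ℓ1-distance to the box is attained at the coordinatewise
clamp of `θ`.
-/

open Finset

section Clamp

variable {α : Type*} [AddCommGroup α] [LinearOrder α] [IsOrderedAddMonoid α]

lemma min_max_sub_zero_eq_min_sub_min {t a b : α} (hab : a ≤ b) :
    min (max (t - a) 0) (b - a) = min t b - min t a := by
  rcases le_total t a with hta | hat
  · rw [max_eq_right (sub_nonpos.2 hta), min_eq_left (sub_nonneg.2 hab), min_eq_left hta,
      min_eq_left (hta.trans hab), sub_self]
  · rw [max_eq_left (sub_nonneg.2 hat), min_eq_right hat, min_sub_sub_right]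

lemma abs_sub_max_min_le_s2 {t a b x : α} (hx : x ∈ Set.Icc a b) :
    |t - max a (min t b)| ≤ |t - x| := by
  grind [abs_le, le_abs_self, neg_abs_le]

lemma abs_sub_max_min_eq {t a b : α} (hab : a ≤ b) :
    |t - max a (min t b)| = (t - min t b) + (a - min t a) := by
  rcases le_total t a with h | h
  · rw [min_eq_left (h.trans hab), min_eq_left h, max_eq_left h, abs_of_nonpos (sub_nonpos.2 h)]
    abel
  · rw [min_eq_right h]
    rcases le_total t b with h' | h'
    · rw [min_eq_left h', max_eq_right h, sub_self, abs_zero]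
      abel
    · rw [min_eq_right h', max_eq_right hab, abs_of_nonneg (sub_nonneg.2 h')]
      abel

end Clamp

section Telescope

variable {M β : Type*} [AddCommGroup M] [LinearOrder β] (g : ℕ → M) {n : ℕ}

lemma Fin.sum_filter_le_eq_sub {m : ℕ} (hmn : m ≤ n) :
    ∑ j ∈ univ.filter (fun j : Fin n => m ≤ (j : ℕ)), (g (j + 1) - g j) = g n - g m := by
  rw [sum_filter, Fin.sum_univ_eq_sum_range (fun j => if m ≤ j then g (j + 1) - g j else 0),
    ← sum_filter, range_eq_Ico, Ico_filter_le, max_eq_right m.zero_le, sum_Ico_sub g hmn]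

lemma Fin.sum_filter_succ_le_eq_sub {k : ℕ} (hkn : k ≤ n) :
    ∑ j ∈ univ.filter (fun j : Fin n => (j : ℕ) + 1 ≤ k), (g (j + 1) - g j) = g k - g 0 := by
  rw [sum_filter, Fin.sum_univ_eq_sum_range (fun j => if j + 1 ≤ k then g (j + 1) - g j else 0),
    ← sum_filter, ← sum_range_sub]
  congr 1
  ext j
  simp only [mem_filter, mem_range]
  omega

lemma StrictMonoOn.sum_filter_lt_succ_eq_sub {w : ℕ → β} (hw : StrictMonoOn w (Set.Iic n))
    {m : ℕ} (hmn : m ≤ n) :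
    ∑ j ∈ univ.filter (fun j : Fin n => w m < w (j + 1)), (g (j + 1) - g j) = g n - g m := by
  rw [filter_congr fun j _ => (hw.lt_iff_lt hmn (Set.mem_Iic.2 j.isLt)).trans Nat.lt_succ_iff]
  exact Fin.sum_filter_le_eq_sub g hmn

lemma StrictMonoOn.sum_filter_succ_le_eq_sub {w : ℕ → β} (hw : StrictMonoOn w (Set.Iic n))
    {k : ℕ} (hkn : k ≤ n) :
    ∑ j ∈ univ.filter (fun j : Fin n => w (j + 1) ≤ w k), (g (j + 1) - g j) = g k - g 0 := by
  rw [filter_congr fun j _ => hw.le_iff_le (Set.mem_Iic.2 j.isLt) hkn]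
  exact Fin.sum_filter_succ_le_eq_sub g hkn

end Telescope

lemma fold_eq_min_sub_min {I : ℕ} {J : Fin I → ℕ} {z : (i : Fin I) → ℕ → ℝ} (θ : Fin I → ℝ)
    {i : Fin I} {j : Fin (J i)} (hj : z i j < z i (j + 1)) :
    fold I J z θ i j = min (θ i) (z i (j + 1)) - min (θ i) (z i j) :=
  min_max_sub_zero_eq_min_sub_min hj.le

lemma dlin_fold_eq_sum {I : ℕ} {J : Fin I → ℕ} {z : (i : Fin I) → ℕ → ℝ}
    (hz : ∀ i, ∀ j, j < J i → z i j < z i (j + 1)) {zm zp : Fin I → ℝ}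
    (hzm : ∀ i, ∃ k ≤ J i, zm i = z i k) (hzp : ∀ i, ∃ k ≤ J i, zp i = z i k)
    {θ : Fin I → ℝ} (hθl : ∀ i, z i 0 ≤ θ i) (hθu : ∀ i, θ i ≤ z i (J i)) :
    dlin I J z (fold I J z θ) zm zp =
      ∑ i, ((θ i - min (θ i) (zp i)) + (zm i - min (θ i) (zm i))) := by
  refine sum_congr rfl fun i _ => ?_
  have hw : StrictMonoOn (z i) (Set.Iic (J i)) := strictMonoOn_Iic_of_lt_succ (hz i)
  obtain ⟨m, hm, hzpm⟩ := hzp i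
  obtain ⟨k, hk, hzmk⟩ := hzm i
  have hfold (j : Fin (J i)) := fold_eq_min_sub_min θ (hz i j j.isLt)
  simp only [hfold, hzpm, hzmk]
  rw [hw.sum_filter_lt_succ_eq_sub (fun j => min (θ i) (z i j)) hm,
    hw.sum_filter_succ_le_eq_sub (fun j => min (θ i) (z i j)) hk,
    min_eq_left (hθu i), min_eq_right (hθl i)]
  ring

lemma l1dist_eq_sum_abs_sub_clamp {I : ℕ} {θ zm zp : Fin I → ℝ} (hmp : zm ≤ zp) :
    l1dist I θ zm zp = ∑ i, |θ i - max (zm i) (min (θ i) (zp i))| := by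
  refine IsLeast.csInf_eq ⟨⟨fun i => max (zm i) (min (θ i) (zp i)),
    ⟨fun i => le_max_left _ _, fun i => max_le (hmp i) (min_le_right _ _)⟩, rfl⟩, ?_⟩
  rintro _ ⟨θ', hθ', rfl⟩
  exact sum_le_sum fun i _ => abs_sub_max_min_le_s2 ⟨hθ'.1 i, hθ'.2 i⟩

theorem stmt_2_general (I : ℕ) (J : Fin I → ℕ)
    (z : (i : Fin I) → ℕ → ℝ)
    (hz : ∀ i, ∀ j, j < J i → z i j < z i (j + 1))
    -- grid rectangle [zm, zp]
    (zm zp : Fin I → ℝ) (hmp : zm ≤ zp)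
    (hzm : ∀ i, ∃ k ≤ J i, zm i = z i k) (hzp : ∀ i, ∃ k ≤ J i, zp i = z i k)
    (θ : Fin I → ℝ) (hθl : ∀ i, z i 0 ≤ θ i) (hθu : ∀ i, θ i ≤ z i (J i)) :
    dlin I J z (fold I J z θ) zm zp = l1dist I θ zm zp := by
  rw [dlin_fold_eq_sum hz hzm hzp hθl hθu, l1dist_eq_sum_abs_sub_clamp hmp]
  exact sum_congr rfl fun i _ => (abs_sub_max_min_eq (hmp i)).symm

theorem stmt_2 (I : ℕ) (J : Fin I → ℕ) (hJ : ∀ i, 1 ≤ J i)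
    (z : (i : Fin I) → ℕ → ℝ)
    (hz : ∀ i, ∀ j, j < J i → z i j < z i (j + 1))
    -- grid rectangle [zm, zp]
    (zm zp : Fin I → ℝ) (hmp : zm ≤ zp)
    (hzm : ∀ i, ∃ k ≤ J i, zm i = z i k) (hzp : ∀ i, ∃ k ≤ J i, zp i = z i k)
    (θ : Fin I → ℝ) (hθl : ∀ i, z i 0 ≤ θ i) (hθu : ∀ i, θ i ≤ z i (J i)) :
    dlin I J z (fold I J z θ) zm zp = l1dist I θ zm zp :=
  stmt_2_general I J z hz zm zp hmp hzm hzp θ hθl hθu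
end

section
/- Let ψ' = (ψ'_{ij}) satisfy 0 ≤ ψ'_{ij} ≤ z_{ij} − z_{i,j−1} for all i ∈ [I] and j ∈ [J_i]. Then for every i ∈ [I] and j ∈ [J_i], Σ_{j'=1}^{j} ψ'_{ij'} ≤ min{F⁺_i(ψ'), z_{ij}} − θ̲_i = Σ_{j'=1}^{j} F_{ij'}(F⁺(ψ')). -/
theorem min_max_sub_eq_min_sub_min {α : Type*} [AddCommGroup α] [LinearOrder α]
    [IsOrderedAddMonoid α] {a b : α} (hab : a ≤ b) (t : α) :
    min (max (t - a) 0) (b - a) = min t b - min t a := by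
  rcases le_total t a with hta | hat
  · rw [max_eq_right (sub_nonpos.2 hta), min_eq_left (sub_nonneg.2 hab),
      min_eq_left (hta.trans hab), min_eq_left hta, sub_self]
  · rw [max_eq_left (sub_nonneg.2 hat), min_eq_right hat, min_sub_sub_right]

theorem Fin.sum_filter_le_eq_sum_range {M : Type*} [AddCommMonoid M] {n : ℕ} (j : Fin n)
    (g : ℕ → M) :
    ∑ j' ∈ Finset.univ.filter (· ≤ j), g j' = ∑ k ∈ Finset.range (j + 1), g k := by
  have hrange : (Finset.univ.filter (· ≤ j)).map Fin.valEmbedding = Finset.range (j + 1) := by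
    ext k
    simp only [Finset.mem_map, Finset.mem_filter, Finset.mem_univ, true_and,
      Fin.valEmbedding_apply, Finset.mem_range]
    exact ⟨fun ⟨k', hk', hk⟩ => hk ▸ Nat.lt_succ_of_le hk',
      fun hk => ⟨⟨k, by omega⟩, Fin.mk_le_of_le_val (by omega), rfl⟩⟩
  rw [← hrange, Finset.sum_map]
  rfl

theorem Fin.sum_filter_le_sub {M : Type*} [AddCommGroup M] {n : ℕ} (j : Fin n) (f : ℕ → M) :
    ∑ j' ∈ Finset.univ.filter (· ≤ j), (f (j' + 1) - f j') = f (j + 1) - f 0 :=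
  (Fin.sum_filter_le_eq_sum_range j fun k => f (k + 1) - f k).trans
    (Finset.sum_range_sub f _)

theorem stmt_4_general (I : ℕ) (J : Fin I → ℕ)
    (z : (i : Fin I) → ℕ → ℝ)
    (hz : ∀ i, ∀ j, j < J i → z i j < z i (j + 1))
    (ψ : (i : Fin I) → Fin (J i) → ℝ)
    (hbound : ∀ i j, 0 ≤ ψ i j ∧ ψ i j ≤ z i (j.val + 1) - z i j.val) :
    ∀ (i : Fin I) (j : Fin (J i)),
      (∑ j' ∈ Finset.univ.filter (fun j' : Fin (J i) => j' ≤ j), ψ i j')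
          ≤ min (retr I J z ψ i) (z i (j.val + 1)) - z i 0 ∧
      min (retr I J z ψ i) (z i (j.val + 1)) - z i 0
          = ∑ j' ∈ Finset.univ.filter (fun j' : Fin (J i) => j' ≤ j),
              fold I J z (retr I J z ψ) i j' := by
  intro i j
  set θ := retr I J z ψ i
  have hψ_nonneg : ∀ j', 0 ≤ ψ i j' := fun j' => (hbound i j').1
  have hθ : z i 0 ≤ θ := le_add_of_nonneg_right (Finset.sum_nonneg fun j' _ => hψ_nonneg j')
  have hfold : ∀ j', fold I J z (retr I J z ψ) i j' = min θ (z i (j' + 1)) - min θ (z i j') :=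
    fun j' => min_max_sub_eq_min_sub_min (hz i j' j'.isLt).le θ
  constructor
  · rw [← min_sub_sub_right]
    refine le_min ?_ ?_
    · exact le_sub_iff_add_le'.2
        (add_le_add_right (Finset.sum_le_univ_sum_of_nonneg hψ_nonneg) _)
    · calc ∑ j' ∈ Finset.univ.filter (· ≤ j), ψ i j'
          ≤ ∑ j' ∈ Finset.univ.filter (· ≤ j), (z i (j' + 1) - z i j') :=
            Finset.sum_le_sum fun j' _ => (hbound i j').2
        _ = z i (j + 1) - z i 0 := Fin.sum_filter_le_sub j (z i)
  · rw [Finset.sum_congr rfl fun j' _ => hfold j', Fin.sum_filter_le_sub j fun k => min θ (z i k),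
      min_eq_right hθ]

theorem stmt_4 (I : ℕ) (J : Fin I → ℕ) (hJ : ∀ i, 1 ≤ J i)
    (z : (i : Fin I) → ℕ → ℝ)
    (hz : ∀ i, ∀ j, j < J i → z i j < z i (j + 1))
    (ψ : (i : Fin I) → Fin (J i) → ℝ)
    (hbound : ∀ i j, 0 ≤ ψ i j ∧ ψ i j ≤ z i (j.val + 1) - z i j.val) :
    ∀ (i : Fin I) (j : Fin (J i)),
      (∑ j' ∈ Finset.univ.filter (fun j' : Fin (J i) => j' ≤ j), ψ i j')
          ≤ min (retr I J z ψ i) (z i (j.val + 1)) - z i 0 ∧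
      min (retr I J z ψ i) (z i (j.val + 1)) - z i 0
          = ∑ j' ∈ Finset.univ.filter (fun j' : Fin (J i) => j' ≤ j),
              fold I J z (retr I J z ψ) i j' :=
  stmt_4_general I J z hz ψ hbound
end

section
/- There exists a subset Ψ̄' ⊆ Ψ'⋄ with R(Ψ̄') = Ψ such that for every affine map x' : ℝ^{N'} → ℝ^n (N' = J_1+…+J_I) satisfying A · x'(ψ') ≤ b(R(ψ')) componentwise for all ψ' ∈ Ψ'⋄, there exists an affine map x : ℝ^N → ℝ^n satisfying A · x(ξ) ≤ b(ξ) componentwise for all ξ ∈ Ψ, and moreover x'(ψ') = x(R(ψ')) for all ψ' ∈ Ψ̄'. (This is the single-support-set case G = 1; the correspondence x = x' ∘ F̄ ∘ E constructed in the proof also preserves the stage-wise non-anticipativity structure, which is omitted here.) -/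
/-- The Moore–Penrose left inverse `E⁺ = (EᵀE)⁻¹Eᵀ`. -/
noncomputable def pinv {I N : ℕ} (E : Matrix (Fin I) (Fin N) ℝ) :
    Matrix (Fin N) (Fin I) ℝ :=
  (E.transpose * E)⁻¹ * E.transpose

/-- The retraction operator `R = E⁺ ∘ F⁺`. -/
noncomputable def retrOp (I N : ℕ) (J : Fin I → ℕ) (z : (i : Fin I) → ℕ → ℝ)
    (E : Matrix (Fin I) (Fin N) ℝ) (ψ : (i : Fin I) → Fin (J i) → ℝ) : Fin N → ℝ :=
  (pinv E).mulVec (retr I J z ψ)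

/-- The outer approximation `Ψ'⋄ = {ψ' : F⁺(ψ') ∈ Θ} ∩ conv(F([θ̲,θ̄]))`. -/
noncomputable def PsiOuter (I : ℕ) (J : Fin I → ℕ) (z : (i : Fin I) → ℕ → ℝ)
    (Θ : Set (Fin I → ℝ)) : Set ((i : Fin I) → Fin (J i) → ℝ) :=
  {ψ | retr I J z ψ ∈ Θ} ∩
    convexHull ℝ (fold I J z '' Set.Icc (fun i => z i 0) (fun i => z i (J i)))

/-!
The inverse of the folding operator on the box is realised by an affine map: the proportional
unfolding `F̄`, which spreads `θ_i - θ̲_i` over the pieces of the `i`-th coordinate in proportion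
to their lengths. It satisfies `F⁺ ∘ F̄ = id`, and on the box it lands in `conv(F([θ̲, θ̄]))`,
because this hull is a product over `i` of hulls each containing the segment from
`F_i(θ̲_i) = 0` to `F_i(θ̄_i)` (the vector of piece lengths), and `F̄_i` maps
`[θ̲_i, θ̄_i]` onto that segment.
Taking `Ψ̄' = F̄(E(Ψ))` and `x = x' ∘ F̄ ∘ E`, the identity `R ∘ F̄ ∘ E = E⁺ ∘ E = id` transfers
the constraints of `x'` on `Ψ'⋄ ⊇ Ψ̄'` to constraints of `x` on `Ψ`.
-/

open Set Matrix

theorem pinv_mul_self {I N : ℕ} {E : Matrix (Fin I) (Fin N) ℝ}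
    (hE : Function.Injective E.mulVec) : pinv E * E = 1 := by
  have hpos : (Eᵀ * E).PosDef := by
    simpa [conjTranspose_eq_transpose_of_trivial] using PosDef.conjTranspose_mul_self E hE
  rw [pinv, Matrix.mul_assoc]
  exact nonsing_inv_mul _ ((isUnit_iff_isUnit_det _).mp hpos.isUnit)

section Folding

variable {I : ℕ} {J : Fin I → ℕ} {z : (i : Fin I) → ℕ → ℝ}

theorem breakpoints_strictMonoOn (hz : ∀ i, ∀ j, j < J i → z i j < z i (j + 1)) (i : Fin I) :
    StrictMonoOn (z i) (Iic (J i)) :=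
  strictMonoOn_Iic_of_lt_succ fun j hj => by simpa [Order.succ_eq_add_one] using hz i j hj

theorem breakpoint_first_lt_last (hJ : ∀ i, 1 ≤ J i)
    (hz : ∀ i, ∀ j, j < J i → z i j < z i (j + 1)) (i : Fin I) : z i 0 < z i (J i) :=
  breakpoints_strictMonoOn hz i (Nat.zero_le _) self_mem_Iic (hJ i)

theorem sum_pieceLengths (i : Fin I) :
    ∑ j : Fin (J i), (z i (j + 1) - z i j) = z i (J i) - z i 0 := by
  rw [Fin.sum_univ_eq_sum_range (fun j => z i (j + 1) - z i j), Finset.sum_range_sub]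

theorem convexHull_fold_image_Icc :
    convexHull ℝ (fold I J z '' Icc (fun i => z i 0) (fun i => z i (J i))) =
      univ.pi fun i => convexHull ℝ
        ((fun t (j : Fin (J i)) => min (max (t - z i j) 0) (z i (j + 1) - z i j)) ''
          Icc (z i 0) (z i (J i))) := by
  rw [← pi_univ_Icc, ← convexHull_pi, ← piMap_image_univ_pi]
  rfl

variable (I J z)

noncomputable def proportionalUnfoldLinear : (Fin I → ℝ) →ₗ[ℝ] ((i : Fin I) → Fin (J i) → ℝ) where
  toFun θ i j := θ i / (z i (J i) - z i 0) * (z i (j + 1) - z i j)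
  map_add' θ θ' := by funext i j; simp [add_div, add_mul]
  map_smul' c θ := by funext i j; simp [mul_div_assoc, mul_assoc]

noncomputable def proportionalUnfold : (Fin I → ℝ) →ᵃ[ℝ] ((i : Fin I) → Fin (J i) → ℝ) :=
  (proportionalUnfoldLinear I J z).toAffineMap -
    AffineMap.const ℝ _ (proportionalUnfoldLinear I J z fun i => z i 0)

variable {I J z}

theorem proportionalUnfold_apply (θ : Fin I → ℝ) (i : Fin I) (j : Fin (J i)) :
    proportionalUnfold I J z θ i j =
      (θ i - z i 0) / (z i (J i) - z i 0) * (z i (j + 1) - z i j) := by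
  simp [proportionalUnfold, proportionalUnfoldLinear, sub_div, sub_mul]

theorem retr_proportionalUnfold (hJ : ∀ i, 1 ≤ J i)
    (hz : ∀ i, ∀ j, j < J i → z i j < z i (j + 1)) (θ : Fin I → ℝ) :
    retr I J z (proportionalUnfold I J z θ) = θ := by
  funext i
  have hD := (sub_pos.mpr (breakpoint_first_lt_last hJ hz i)).ne'
  simp only [retr, proportionalUnfold_apply, ← Finset.mul_sum, sum_pieceLengths,
    div_mul_cancel₀ _ hD]
  ring

theorem proportionalUnfold_mem_convexHull_fold (hJ : ∀ i, 1 ≤ J i)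
    (hz : ∀ i, ∀ j, j < J i → z i j < z i (j + 1)) {θ : Fin I → ℝ}
    (hθ : θ ∈ Icc (fun i => z i 0) (fun i => z i (J i))) :
    proportionalUnfold I J z θ ∈
      convexHull ℝ (fold I J z '' Icc (fun i => z i 0) (fun i => z i (J i))) := by
  rw [convexHull_fold_image_Icc]
  intro i _
  have hmono := (breakpoints_strictMonoOn hz i).monotoneOn
  have hlt := breakpoint_first_lt_last hJ hz i
  set t := (θ i - z i 0) / (z i (J i) - z i 0)
  have ht0 : 0 ≤ t := div_nonneg (sub_nonneg.mpr (hθ.1 i)) (sub_pos.mpr hlt).le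
  have ht1 : t ≤ 1 := (div_le_one (sub_pos.mpr hlt)).mpr (sub_le_sub_right (hθ.2 i) _)
  refine segment_subset_convexHull (mem_image_of_mem _ (left_mem_Icc.mpr hlt.le))
    (mem_image_of_mem _ (right_mem_Icc.mpr hlt.le)) ⟨1 - t, t, by linarith, ht0, by ring, ?_⟩
  funext j
  have hj : z i 0 ≤ z i j := hmono (Nat.zero_le _) (mem_Iic.mpr j.isLt.le) (Nat.zero_le _)
  have hj' : z i (j + 1) ≤ z i (J i) := hmono (mem_Iic.mpr j.isLt) self_mem_Iic j.isLt
  have hlen : z i j < z i (j + 1) := hz i j j.isLt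
  simp only [Pi.add_apply, Pi.smul_apply, smul_eq_mul, proportionalUnfold_apply]
  rw [max_eq_right (by linarith : z i 0 - z i j ≤ 0), min_eq_left (by linarith : (0 : ℝ) ≤ _),
    max_eq_left (by linarith : 0 ≤ z i (J i) - z i j), min_eq_right (by linarith)]
  ring

end Folding

theorem retrOp_proportionalUnfold_mulVec {I N : ℕ} {J : Fin I → ℕ}
    {z : (i : Fin I) → ℕ → ℝ}
    (hJ : ∀ i, 1 ≤ J i) (hz : ∀ i, ∀ j, j < J i → z i j < z i (j + 1))
    {E : Matrix (Fin I) (Fin N) ℝ} (hE : Function.Injective E.mulVec) (ξ : Fin N → ℝ) :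
    retrOp I N J z E (proportionalUnfold I J z (E *ᵥ ξ)) = ξ := by
  rw [retrOp, retr_proportionalUnfold hJ hz, mulVec_mulVec, pinv_mul_self hE, one_mulVec]

theorem proportionalUnfold_mulVec_mem_psiOuter {I N : ℕ} {J : Fin I → ℕ}
    {z : (i : Fin I) → ℕ → ℝ}
    (hJ : ∀ i, 1 ≤ J i) (hz : ∀ i, ∀ j, j < J i → z i j < z i (j + 1))
    {Ψ : Set (Fin N → ℝ)} {E : Matrix (Fin I) (Fin N) ℝ}
    (hΘbox : E.mulVec '' Ψ ⊆ Icc (fun i => z i 0) (fun i => z i (J i)))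
    {ξ : Fin N → ℝ} (hξ : ξ ∈ Ψ) :
    proportionalUnfold I J z (E *ᵥ ξ) ∈ PsiOuter I J z (E.mulVec '' Ψ) := by
  refine ⟨?_, proportionalUnfold_mem_convexHull_fold hJ hz
    (hΘbox (mem_image_of_mem _ hξ))⟩
  show retr I J z _ ∈ E.mulVec '' Ψ
  rw [retr_proportionalUnfold hJ hz]
  exact mem_image_of_mem _ hξ

theorem stmt_7_general (I N n m : ℕ) (J : Fin I → ℕ) (hJ : ∀ i, 1 ≤ J i)
    (z : (i : Fin I) → ℕ → ℝ)
    (hz : ∀ i, ∀ j, j < J i → z i j < z i (j + 1))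
    (Ψ : Set (Fin N → ℝ))
    (E : Matrix (Fin I) (Fin N) ℝ) (hE : Function.Injective E.mulVec)
    (hΘbox : E.mulVec '' Ψ ⊆ Set.Icc (fun i => z i 0) (fun i => z i (J i)))
    (A : Matrix (Fin m) (Fin n) ℝ)
    (b : (Fin N → ℝ) →ᵃ[ℝ] (Fin m → ℝ)) :
    ∃ Ψbar : Set ((i : Fin I) → Fin (J i) → ℝ),
      Ψbar ⊆ PsiOuter I J z (E.mulVec '' Ψ) ∧
      retrOp I N J z E '' Ψbar = Ψ ∧
      ∀ x' : ((i : Fin I) → Fin (J i) → ℝ) →ᵃ[ℝ] (Fin n → ℝ),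
        (∀ ψ ∈ PsiOuter I J z (E.mulVec '' Ψ),
            A.mulVec (x' ψ) ≤ b (retrOp I N J z E ψ)) →
        ∃ x : (Fin N → ℝ) →ᵃ[ℝ] (Fin n → ℝ),
          (∀ ξ ∈ Ψ, A.mulVec (x ξ) ≤ b ξ) ∧
          ∀ ψ ∈ Ψbar, x' ψ = x (retrOp I N J z E ψ) := by
  have hR := retrOp_proportionalUnfold_mulVec hJ hz hE
  have hmem : ∀ ξ ∈ Ψ,
      proportionalUnfold I J z (E *ᵥ ξ) ∈ PsiOuter I J z (E.mulVec '' Ψ) :=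
    fun _ => proportionalUnfold_mulVec_mem_psiOuter hJ hz hΘbox
  refine ⟨(fun ξ => proportionalUnfold I J z (E *ᵥ ξ)) '' Ψ, image_subset_iff.mpr hmem, ?_,
    fun x' hx' => ?_⟩
  · rw [image_image]
    simp only [hR, image_id']
  · refine ⟨x'.comp ((proportionalUnfold I J z).comp E.mulVecLin.toAffineMap),
      fun ξ hξ => ?_, ?_⟩
    · simpa [hR] using hx' _ (hmem ξ hξ)
    · rintro _ ⟨ξ, -, rfl⟩
      simp [hR]

theorem stmt_7 (I N n m : ℕ) (J : Fin I → ℕ) (hJ : ∀ i, 1 ≤ J i)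
    (z : (i : Fin I) → ℕ → ℝ)
    (hz : ∀ i, ∀ j, j < J i → z i j < z i (j + 1))
    (Ψ : Set (Fin N → ℝ)) (hΨne : Ψ.Nonempty) (hΨcomp : IsCompact Ψ)
    (E : Matrix (Fin I) (Fin N) ℝ) (hE : Function.Injective E.mulVec)
    (hΘbox : E.mulVec '' Ψ ⊆ Set.Icc (fun i => z i 0) (fun i => z i (J i)))
    (A : Matrix (Fin m) (Fin n) ℝ)
    (b : (Fin N → ℝ) →ᵃ[ℝ] (Fin m → ℝ)) :
    ∃ Ψbar : Set ((i : Fin I) → Fin (J i) → ℝ),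
      Ψbar ⊆ PsiOuter I J z (E.mulVec '' Ψ) ∧
      retrOp I N J z E '' Ψbar = Ψ ∧
      ∀ x' : ((i : Fin I) → Fin (J i) → ℝ) →ᵃ[ℝ] (Fin n → ℝ),
        (∀ ψ ∈ PsiOuter I J z (E.mulVec '' Ψ),
            A.mulVec (x' ψ) ≤ b (retrOp I N J z E ψ)) →
        ∃ x : (Fin N → ℝ) →ᵃ[ℝ] (Fin n → ℝ),
          (∀ ξ ∈ Ψ, A.mulVec (x ξ) ≤ b ξ) ∧
          ∀ ψ ∈ Ψbar, x' ψ = x (retrOp I N J z E ψ) :=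
  stmt_7_general I N n m J hJ z hz Ψ E hE hΘbox A b
end

section
/- Let (V, E) be a finite connected undirected graph with n vertices and m edges and vertex–edge incidence matrix W ∈ {0,1}^{n×m}. Then the minimum vertex cover value min { eᵀy : Wᵀy ≥ e, y ∈ {0,1}^n } equals the optimal value of the mixed program min { 2eᵀy − eᵀδ : Wᵀy ≥ e, y ≥ δ, y ≥ 0, y ∈ ℝ^n, δ ∈ {0,1}^n }, where e denotes the all-ones vector of appropriate dimension and all inequalities are componentwise. -/
/-!
Every 0/1 vertex cover `y` gives the feasible point `δ = y` of the mixed program with the same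
value, so the mixed optimum is at most the cover number. Conversely, round a feasible `(y, δ)` to
the indicator `y'` of `{v | 1/2 ≤ y v}`: it is still a cover, since `y u + y w ≥ 1` forces one
endpoint to be at least `1/2`, and `y' v ≤ 2 y v - δ v` at every vertex, because `δ v = 1` forces
`y v ≥ 1`.
-/

open Finset

theorem csInf_eq_csInf_of_subset_of_forall_exists_le {α : Type*} [ConditionallyCompleteLattice α]
    {s t : Set α} (hs : s.Nonempty) (ht : BddBelow t) (hst : s ⊆ t)
    (h : ∀ b ∈ t, ∃ a ∈ s, a ≤ b) : sInf s = sInf t := by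
  refine le_antisymm (le_csInf (hs.mono hst) fun b hb => ?_) (csInf_le_csInf ht hs hst)
  obtain ⟨a, ha, hab⟩ := h b hb
  exact (csInf_le (ht.mono hst) ha).trans hab

theorem sum_ite_mem_mul_eq_add {V : Type*} [Fintype V] {z : Sym2 V} [DecidablePred (· ∈ z)]
    {u w : V} (hz : z = s(u, w)) (huw : u ≠ w) (g : V → ℝ) :
    ∑ v, (if v ∈ z then 1 else 0) * g v = g u + g w := by
  subst hz
  rw [Fintype.sum_eq_add u w huw fun v hv => by simp [Sym2.mem_iff, hv.1, hv.2]]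
  simp

theorem exists_forall_sum_incidence_mul {V ι : Type*} [Fintype V] {G : SimpleGraph V}
    (e : ι → G.edgeSet) [∀ v k, Decidable (v ∈ (e k : Sym2 V))] {W : Matrix V ι ℝ}
    (hW : ∀ v k, W v k = if v ∈ (e k : Sym2 V) then 1 else 0) (k : ι) :
    ∃ u w, ∀ g : V → ℝ, ∑ v, W v k * g v = g u + g w := by
  obtain ⟨⟨u, w⟩, hk⟩ := Quot.exists_rep (e k : Sym2 V)
  have hadj : G.Adj u w := by simpa [← hk] using (e k).2
  refine ⟨u, w, fun g => ?_⟩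
  simp only [hW]
  exact sum_ite_mem_mul_eq_add hk.symm hadj.ne g

section Rounding

variable {V ι : Type*}

noncomputable def roundHalf (y : V → ℝ) (v : V) : ℝ :=
  if 1 / 2 ≤ y v then 1 else 0

theorem roundHalf_eq_zero_or_eq_one (y : V → ℝ) (v : V) :
    roundHalf y v = 0 ∨ roundHalf y v = 1 := by
  unfold roundHalf
  split_ifs <;> simp

theorem roundHalf_nonneg (y : V → ℝ) (v : V) : 0 ≤ roundHalf y v := by
  rcases roundHalf_eq_zero_or_eq_one y v with h | h <;> norm_num [h]

theorem one_le_roundHalf_add {y : V → ℝ} {u w : V} (h : 1 ≤ y u + y w) :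
    1 ≤ roundHalf y u + roundHalf y w := by
  have hu := roundHalf_nonneg y u
  have hw := roundHalf_nonneg y w
  unfold roundHalf at *
  split_ifs at * <;> linarith

theorem roundHalf_le_two_mul_sub {y : V → ℝ} {d : ℝ} {v : V} (hy : 0 ≤ y v) (hdy : d ≤ y v)
    (hd : d = 0 ∨ d = 1) : roundHalf y v ≤ 2 * y v - d := by
  unfold roundHalf
  rcases hd with rfl | rfl <;> split_ifs <;> linarith

theorem one_le_sum_roundHalf_of_one_le_sum [Fintype V] {W : Matrix V ι ℝ}
    (hW : ∀ k, ∃ u w, ∀ g : V → ℝ, ∑ v, W v k * g v = g u + g w)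
    {y : V → ℝ} (hy : ∀ k, 1 ≤ ∑ v, W v k * y v) (k : ι) :
    1 ≤ ∑ v, W v k * roundHalf y v := by
  obtain ⟨u, w, hsum⟩ := hW k
  rw [hsum]
  exact one_le_roundHalf_add (hsum y ▸ hy k)

end Rounding

open scoped Classical in
theorem stmt_9_general (n m : ℕ) (G : SimpleGraph (Fin n))
    (e : Fin m ≃ G.edgeSet)
    (W : Matrix (Fin n) (Fin m) ℝ)
    (hW : ∀ v k, W v k = if v ∈ (e k : Sym2 (Fin n)) then (1 : ℝ) else 0) :
    sInf {val : ℝ | ∃ y : Fin n → ℝ, (∀ v, y v = 0 ∨ y v = 1) ∧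
        (∀ k, 1 ≤ ∑ v, W v k * y v) ∧ val = ∑ v, y v} =
    sInf {val : ℝ | ∃ y δ : Fin n → ℝ, (∀ k, 1 ≤ ∑ v, W v k * y v) ∧
        (∀ v, δ v ≤ y v) ∧ (∀ v, 0 ≤ y v) ∧ (∀ v, δ v = 0 ∨ δ v = 1) ∧
        val = 2 * ∑ v, y v - ∑ v, δ v} := by
  have hcol := exists_forall_sum_incidence_mul e hW
  refine csInf_eq_csInf_of_subset_of_forall_exists_le ?_ ⟨0, ?_⟩ ?_ ?_
  · refine ⟨_, fun _ => 1, fun _ => Or.inr rfl, fun k => ?_, rfl⟩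
    obtain ⟨u, w, hsum⟩ := hcol k
    rw [hsum]
    norm_num
  · rintro _ ⟨y, δ, -, hδy, hy, -, rfl⟩
    have : ∑ v, δ v ≤ ∑ v, y v := sum_le_sum fun v _ => hδy v
    linarith [sum_nonneg fun v (_ : v ∈ univ) => hy v]
  · rintro _ ⟨y, hy01, hcov, rfl⟩
    refine ⟨y, y, hcov, fun _ => le_rfl, fun v => ?_, hy01, by ring⟩
    rcases hy01 v with h | h <;> norm_num [h]
  · rintro _ ⟨y, δ, hcov, hδy, hy, hδ, rfl⟩
    refine ⟨_, ⟨roundHalf y, roundHalf_eq_zero_or_eq_one y,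
      one_le_sum_roundHalf_of_one_le_sum hcol hcov, rfl⟩, ?_⟩
    calc ∑ v, roundHalf y v ≤ ∑ v, (2 * y v - δ v) :=
          sum_le_sum fun v _ => roundHalf_le_two_mul_sub (hy v) (hδy v) (hδ v)
      _ = 2 * ∑ v, y v - ∑ v, δ v := by rw [sum_sub_distrib, mul_sum]

open scoped Classical in
/-- Minimum vertex cover equals the optimal value of the mixed program
`min { 2eᵀy − eᵀδ : Wᵀy ≥ e, y ≥ δ, y ≥ 0, δ ∈ {0,1}ⁿ }`. -/
theorem stmt_9 (n m : ℕ) (G : SimpleGraph (Fin n)) (hconn : G.Connected)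
    (e : Fin m ≃ G.edgeSet)
    (W : Matrix (Fin n) (Fin m) ℝ)
    (hW : ∀ v k, W v k = if v ∈ (e k : Sym2 (Fin n)) then (1 : ℝ) else 0) :
    sInf {val : ℝ | ∃ y : Fin n → ℝ, (∀ v, y v = 0 ∨ y v = 1) ∧
        (∀ k, 1 ≤ ∑ v, W v k * y v) ∧ val = ∑ v, y v} =
    sInf {val : ℝ | ∃ y δ : Fin n → ℝ, (∀ k, 1 ≤ ∑ v, W v k * y v) ∧
        (∀ v, δ v ≤ y v) ∧ (∀ v, 0 ≤ y v) ∧ (∀ v, δ v = 0 ∨ δ v = 1) ∧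
        val = 2 * ∑ v, y v - ∑ v, δ v} :=
  stmt_9_general n m G e W hW
end

section
/- Let (V, E) be a finite connected undirected graph with n vertices and incidence matrix W ∈ {0,1}^{n×m}. Then the mixed program min { 2eᵀy − eᵀδ : Wᵀy ≥ e, y ≥ δ, y ≥ 0, y ∈ ℝ^n, δ ∈ {0,1}^n } admits an optimal solution (y, δ) in which y is binary, i.e., y ∈ {0,1}^n. -/
/-!
The optimum of the mixed program is the vertex cover number `τ(G)`. The indicator `y = δ = 𝟙_C`
of a minimum vertex cover `C` is feasible with value `|C|`. Conversely, for any feasible `(y, δ)`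
the set `{v | 1/2 ≤ y v}` is a vertex cover, and each term `2 y v - δ v` is at least its indicator
(if `δ v = 1` then `y v ≥ 1`), so the objective is at least `τ(G)`.
-/

open Finset

theorem ite_half_le_two_mul_sub {t d : ℝ} (hdt : d ≤ t) (ht : 0 ≤ t) (hd : d = 0 ∨ d = 1) :
    (if 1 / 2 ≤ t then 1 else 0 : ℝ) ≤ 2 * t - d := by
  split_ifs with h <;> rcases hd with rfl | rfl <;> linarith

namespace SimpleGraph

variable {V ι : Type*} {G : SimpleGraph V}

theorem sum_ite_mem_sym2_mul [Fintype V] [DecidableEq V] {a b : V} (hab : a ≠ b) (y : V → ℝ) :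
    ∑ v, (if v ∈ s(a, b) then (1 : ℝ) else 0) * y v = y a + y b := by
  simp only [Sym2.mem_iff, ite_mul, one_mul, zero_mul]
  rw [sum_ite, sum_const_zero, add_zero, filter_or, filter_eq', filter_eq',
    if_pos (mem_univ _), if_pos (mem_univ _), ← insert_eq, sum_pair hab]

theorem forall_one_le_incidence_sum_iff [Fintype V] [DecidableEq V] (e : ι ≃ G.edgeSet)
    (W : Matrix V ι ℝ)
    (hW : ∀ v k, W v k = if v ∈ (e k : Sym2 V) then (1 : ℝ) else 0) (y : V → ℝ) :
    (∀ k, 1 ≤ ∑ v, W v k * y v) ↔ ∀ a b, G.Adj a b → 1 ≤ y a + y b := by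
  simp only [hW, e.forall_congr_left, Equiv.apply_symm_apply, Subtype.forall, Sym2.forall,
    mem_edgeSet]
  exact forall₂_congr fun a b ↦ forall_congr' fun hab ↦ by rw [sum_ite_mem_sym2_mul hab.ne]

theorem isVertexCover_setOf_half_le {y : V → ℝ} (hy : ∀ a b, G.Adj a b → 1 ≤ y a + y b) :
    G.IsVertexCover {v | 1 / 2 ≤ y v} := by
  intro a b hab
  by_contra! h
  simp only [Set.mem_ofPred_eq, not_le] at h
  linarith [hy a b hab]

theorem IsVertexCover.one_le_indicator_add {C : Set V} (hC : G.IsVertexCover C) {a b : V}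
    (hab : G.Adj a b) : 1 ≤ C.indicator (1 : V → ℝ) a + C.indicator 1 b := by
  have hnonneg (v : V) : 0 ≤ C.indicator (1 : V → ℝ) v :=
    Set.indicator_apply_nonneg fun _ ↦ zero_le_one
  rcases hC hab with h | h <;>
    simp only [Set.indicator_of_mem h, Pi.one_apply] <;>
    linarith [hnonneg a, hnonneg b]

theorem exists_finset_isVertexCover_card_le [Fintype V] (G : SimpleGraph V) :
    ∃ C : Finset V, G.IsVertexCover C ∧ ∀ S : Finset V, G.IsVertexCover S → #C ≤ #S := by
  classical
  obtain ⟨C, hC, hmin⟩ := (univ.filter fun C : Finset V ↦ G.IsVertexCover C).exists_min_image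
    card ⟨univ, by simp⟩
  exact ⟨C, (mem_filter.1 hC).2, fun S hS ↦ hmin S (mem_filter.2 ⟨mem_univ _, hS⟩)⟩

theorem card_le_two_mul_sum_sub_sum [Fintype V] {C : Finset V}
    (hC : ∀ S : Finset V, G.IsVertexCover S → #C ≤ #S) {y δ : V → ℝ}
    (hy : ∀ a b, G.Adj a b → 1 ≤ y a + y b) (hδy : ∀ v, δ v ≤ y v) (hy0 : ∀ v, 0 ≤ y v)
    (hδ : ∀ v, δ v = 0 ∨ δ v = 1) :
    (#C : ℝ) ≤ 2 * ∑ v, y v - ∑ v, δ v := by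
  classical
  have hcover : G.IsVertexCover ↑(univ.filter fun v ↦ 1 / 2 ≤ y v) := by
    simpa using isVertexCover_setOf_half_le hy
  calc (#C : ℝ) ≤ #(univ.filter fun v ↦ 1 / 2 ≤ y v) := by exact_mod_cast hC _ hcover
    _ = ∑ v, if 1 / 2 ≤ y v then 1 else 0 := by rw [sum_boole]
    _ ≤ ∑ v, (2 * y v - δ v) :=
      sum_le_sum fun v _ ↦ ite_half_le_two_mul_sub (hδy v) (hy0 v) (hδ v)
    _ = 2 * ∑ v, y v - ∑ v, δ v := by rw [sum_sub_distrib, mul_sum]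

end SimpleGraph

open scoped Classical in
theorem stmt_10_general (n m : ℕ) (G : SimpleGraph (Fin n))
    (e : Fin m ≃ G.edgeSet)
    (W : Matrix (Fin n) (Fin m) ℝ)
    (hW : ∀ v k, W v k = if v ∈ (e k : Sym2 (Fin n)) then (1 : ℝ) else 0) :
    ∃ y δ : Fin n → ℝ,
      (∀ k, 1 ≤ ∑ v, W v k * y v) ∧ (∀ v, δ v ≤ y v) ∧ (∀ v, 0 ≤ y v) ∧
      (∀ v, δ v = 0 ∨ δ v = 1) ∧ (∀ v, y v = 0 ∨ y v = 1) ∧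
      ∀ y' δ' : Fin n → ℝ,
        (∀ k, 1 ≤ ∑ v, W v k * y' v) → (∀ v, δ' v ≤ y' v) → (∀ v, 0 ≤ y' v) →
        (∀ v, δ' v = 0 ∨ δ' v = 1) →
        2 * ∑ v, y v - ∑ v, δ v ≤ 2 * ∑ v, y' v - ∑ v, δ' v := by
  obtain ⟨C, hC, hmin⟩ := G.exists_finset_isVertexCover_card_le
  set y : Fin n → ℝ := (C : Set (Fin n)).indicator 1
  have hbinary : ∀ v, y v = 0 ∨ y v = 1 := fun v ↦ by
    by_cases hv : v ∈ (C : Set (Fin n)) <;> simp [y, hv]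
  have hsum : ∑ v, y v = #C := by simp [y, Set.indicator_apply]
  refine ⟨y, y, (G.forall_one_le_incidence_sum_iff e W hW y).2 fun _ _ ↦ hC.one_le_indicator_add,
    fun v ↦ le_rfl, fun v ↦ Set.indicator_apply_nonneg fun _ ↦ zero_le_one, hbinary, hbinary,
    fun y' δ' hcov hδy hy0 hδ ↦ ?_⟩
  rw [hsum, two_mul, add_sub_cancel_right]
  exact G.card_le_two_mul_sum_sub_sum hmin
    ((G.forall_one_le_incidence_sum_iff e W hW y').1 hcov) hδy hy0 hδ

open scoped Classical in
/-- The mixed program `min { 2eᵀy − eᵀδ : Wᵀy ≥ e, y ≥ δ, y ≥ 0, δ ∈ {0,1}ⁿ }`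
admits an optimal solution in which `y` is binary. -/
theorem stmt_10 (n m : ℕ) (G : SimpleGraph (Fin n)) (hconn : G.Connected)
    (e : Fin m ≃ G.edgeSet)
    (W : Matrix (Fin n) (Fin m) ℝ)
    (hW : ∀ v k, W v k = if v ∈ (e k : Sym2 (Fin n)) then (1 : ℝ) else 0) :
    ∃ y δ : Fin n → ℝ,
      (∀ k, 1 ≤ ∑ v, W v k * y v) ∧ (∀ v, δ v ≤ y v) ∧ (∀ v, 0 ≤ y v) ∧
      (∀ v, δ v = 0 ∨ δ v = 1) ∧ (∀ v, y v = 0 ∨ y v = 1) ∧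
      ∀ y' δ' : Fin n → ℝ,
        (∀ k, 1 ≤ ∑ v, W v k * y' v) → (∀ v, δ' v ≤ y' v) → (∀ v, 0 ≤ y' v) →
        (∀ v, δ' v = 0 ∨ δ' v = 1) →
        2 * ∑ v, y v - ∑ v, δ v ≤ 2 * ∑ v, y' v - ∑ v, δ' v :=
  stmt_10_general n m G e W hW
end

section
/- Let Θ ⊆ ℝ^I be nonempty, compact, convex, and signed-permutation invariant. Then for every i ∈ [I] there exists λ ∈ ℝ such that the vector λ·(e_1 + … + e_i) (equal to λ in the first i coordinates and 0 elsewhere) belongs to Θ and i·λ = η(i). -/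
/-- `Θ` is invariant under signed permutations of the coordinates. -/
def SignedPermInvariant (I : ℕ) (Θ : Set (Fin I → ℝ)) : Prop :=
  ∀ (σ : Equiv.Perm (Fin I)) (ε : Fin I → ℝ), (∀ i, ε i = 1 ∨ ε i = -1) →
    ∀ θ ∈ Θ, (fun i => ε i * θ (σ i)) ∈ Θ

/-- `eta I Θ i` is the maximal ℓ1-norm of the first `i` components over `Θ`. -/
noncomputable def eta (I : ℕ) (Θ : Set (Fin I → ℝ)) (i : ℕ) : ℝ :=
  sSup ((fun θ => ∑ i' ∈ Finset.univ.filter (fun i' : Fin I => (i' : ℕ) < i), |θ i'|) '' Θ)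

/-!
The function `θ ↦ ∑_{j < i} |θ j|` attains `η(i)` on the compact set `Θ`, and flipping signs turns a
maximiser into a point of `Θ` on the hyperplane `∑_{j < i} θ j = η(i)`. The slice `F` of `Θ` by this
hyperplane is compact, convex, and invariant under swapping two of the first `i` coordinates and under
flipping the sign of a later one. Since `∑ j, θ j ^ 2` is strictly convex, its minimiser on `F` is
unique, hence fixed by these symmetries: its first `i` coordinates agree and the others vanish.
-/

open Finset

section SumSq

variable {ι : Type*} [Fintype ι]

theorem strictConvexOn_sum_sq : StrictConvexOn ℝ Set.univ (fun x : ι → ℝ => ∑ j, x j ^ 2) := by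
  refine ⟨convex_univ, fun x _ y _ hxy a b ha hb hab => ?_⟩
  obtain ⟨j₀, hj₀⟩ := Function.ne_iff.mp hxy
  have hgap : ∀ j, a * x j ^ 2 + b * y j ^ 2 - (a * x j + b * y j) ^ 2 = a * b * (x j - y j) ^ 2 :=
    fun j => by linear_combination (-(a * x j ^ 2 + b * y j ^ 2)) * hab
  simp only [Pi.add_apply, Pi.smul_apply, smul_eq_mul, mul_sum, ← sum_add_distrib]
  refine sum_lt_sum (fun j _ => ?_) ⟨j₀, mem_univ _, ?_⟩
  · nlinarith [hgap j, mul_nonneg (mul_nonneg ha.le hb.le) (sq_nonneg (x j - y j))]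
  · nlinarith [hgap j₀, mul_pos (mul_pos ha hb) (sq_pos_of_ne_zero (sub_ne_zero.mpr hj₀))]

theorem IsMinOn.eq_of_sum_sq_eq {F : Set (ι → ℝ)} (hF : Convex ℝ F) {x y : ι → ℝ}
    (hmin : IsMinOn (fun z => ∑ j, z j ^ 2) F x) (hx : x ∈ F) (hy : y ∈ F)
    (h : ∑ j, y j ^ 2 = ∑ j, x j ^ 2) : y = x :=
  (strictConvexOn_sum_sq.subset (Set.subset_univ F) hF).eq_of_isMinOn
    (isMinOn_iff.mpr fun z hz => h.trans_le (isMinOn_iff.mp hmin z hz)) hmin hy hx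

end SumSq

namespace SignedPermInvariant

variable {I : ℕ} {Θ : Set (Fin I → ℝ)}

theorem comp_perm_mem (hΘ : SignedPermInvariant I Θ) (σ : Equiv.Perm (Fin I))
    {θ : Fin I → ℝ} (hθ : θ ∈ Θ) : θ ∘ σ ∈ Θ :=
  (by simpa using hΘ σ 1 (fun _ => Or.inl rfl) θ hθ : (fun j => θ (σ j)) ∈ Θ)

theorem mul_signs_mem (hΘ : SignedPermInvariant I Θ) {ε : Fin I → ℝ}
    (hε : ∀ j, ε j = 1 ∨ ε j = -1) {θ : Fin I → ℝ} (hθ : θ ∈ Θ) : ε * θ ∈ Θ :=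
  hΘ (Equiv.refl _) ε hε θ hθ

theorem abs_mem (hΘ : SignedPermInvariant I Θ) {θ : Fin I → ℝ} (hθ : θ ∈ Θ) : |θ| ∈ Θ := by
  convert hΘ.mul_signs_mem (ε := fun j => if θ j < 0 then -1 else 1)
    (fun j => by split_ifs <;> simp) hθ using 1
  ext j
  simp only [Pi.abs_apply, Pi.mul_apply]
  split_ifs with h
  · simp [abs_of_neg h]
  · simp [abs_of_nonneg (not_lt.mp h)]

variable {s : Finset (Fin I)} {c : ℝ} {θ : Fin I → ℝ}

theorem comp_swap_mem_slice (hΘ : SignedPermInvariant I Θ) {j k : Fin I} (hj : j ∈ s)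
    (hk : k ∈ s) (hθ : θ ∈ Θ ∩ {θ | ∑ m ∈ s, θ m = c}) :
    θ ∘ Equiv.swap j k ∈ Θ ∩ {θ | ∑ m ∈ s, θ m = c} := by
  refine ⟨hΘ.comp_perm_mem _ hθ.1, ?_⟩
  have hsupp : {m | Equiv.swap j k m ≠ m} ⊆ s := fun m hm => by
    by_contra hms
    exact hm (Equiv.swap_apply_of_ne_of_ne (ne_of_mem_of_not_mem hj hms).symm
      (ne_of_mem_of_not_mem hk hms).symm)
  simpa only [Set.mem_ofPred_eq, Function.comp_apply, (Equiv.swap j k).sum_comp s θ hsupp]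
    using hθ.2

theorem flip_mem_slice (hΘ : SignedPermInvariant I Θ) {j : Fin I} (hj : j ∉ s)
    (hθ : θ ∈ Θ ∩ {θ | ∑ m ∈ s, θ m = c}) :
    (fun m => if m = j then -1 else 1) * θ ∈ Θ ∩ {θ | ∑ m ∈ s, θ m = c} := by
  refine ⟨hΘ.mul_signs_mem (fun m => by split_ifs <;> simp) hθ.1, ?_⟩
  rw [Set.mem_ofPred_eq, ← hθ.2]
  refine sum_congr rfl fun m hm => ?_
  simp [ne_of_mem_of_not_mem hm hj]

theorem exists_indicator_mem_of_slice_nonempty (hΘ : SignedPermInvariant I Θ)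
    (hcomp : IsCompact Θ) (hconv : Convex ℝ Θ) (hs : s.Nonempty)
    (hc : (Θ ∩ {θ | ∑ m ∈ s, θ m = c}).Nonempty) :
    ∃ lam : ℝ, (fun j => if j ∈ s then lam else 0) ∈ Θ ∧ (#s : ℝ) * lam = c := by
  set F := Θ ∩ {θ | ∑ m ∈ s, θ m = c}
  have hFconv : Convex ℝ F := hconv.inter <| convex_hyperplane
    ⟨fun _ _ => by simp [sum_add_distrib], fun _ _ => by simp [mul_sum]⟩ c
  have hFcomp : IsCompact F := hcomp.inter_right (isClosed_eq (by fun_prop) continuous_const)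
  obtain ⟨x, hxF, hxmin⟩ :=
    hFcomp.exists_isMinOn hc (by fun_prop : Continuous fun z : Fin I → ℝ => ∑ j, z j ^ 2).continuousOn
  have hconst : ∀ j ∈ s, ∀ k ∈ s, x k = x j := fun j hj k hk => by
    have := IsMinOn.eq_of_sum_sq_eq hFconv hxmin hxF (hΘ.comp_swap_mem_slice hj hk hxF)
      (Equiv.sum_comp _ fun m => x m ^ 2)
    simpa using congrFun this j
  have hzero : ∀ j ∉ s, x j = 0 := fun j hj => by
    have := IsMinOn.eq_of_sum_sq_eq hFconv hxmin hxF (hΘ.flip_mem_slice hj hxF)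
      (sum_congr rfl fun m _ => by simp only [Pi.mul_apply]; split_ifs <;> ring)
    linarith [show -x j = x j by simpa using congrFun this j]
  obtain ⟨j₀, hj₀⟩ := hs
  refine ⟨x j₀, ?_, ?_⟩
  · convert hxF.1 using 1
    ext j
    split_ifs with hj
    exacts [(hconst j₀ hj₀ j hj).symm, (hzero j hj).symm]
  · rw [← hxF.2, sum_congr rfl fun k hk => hconst j₀ hj₀ k hk, sum_const, nsmul_eq_mul]

theorem exists_sum_eq_sSup (hΘ : SignedPermInvariant I Θ) (hne : Θ.Nonempty)
    (hcomp : IsCompact Θ) (s : Finset (Fin I)) :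
    ∃ θ ∈ Θ, ∑ m ∈ s, θ m = sSup ((fun θ => ∑ m ∈ s, |θ m|) '' Θ) := by
  obtain ⟨θ, hθ, hmax⟩ := hcomp.exists_sSup_image_eq hne
    (by fun_prop : Continuous fun θ : Fin I → ℝ => ∑ m ∈ s, |θ m|).continuousOn
  exact ⟨|θ|, hΘ.abs_mem hθ, hmax.symm⟩

end SignedPermInvariant

theorem stmt_11 (I : ℕ) (Θ : Set (Fin I → ℝ))
    (hne : Θ.Nonempty) (hcomp : IsCompact Θ) (hconv : Convex ℝ Θ)
    (hSPI : SignedPermInvariant I Θ) :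
    ∀ i : ℕ, 1 ≤ i → i ≤ I →
      ∃ lam : ℝ, (fun i' : Fin I => if (i' : ℕ) < i then lam else 0) ∈ Θ ∧
        (i : ℝ) * lam = eta I Θ i := by
  intro i hi hiI
  set s : Finset (Fin I) := {j | (j : ℕ) < i}
  have hs : s.Nonempty := ⟨⟨0, by omega⟩, by simp [s]; omega⟩
  obtain ⟨lam, hmem, hlam⟩ := hSPI.exists_indicator_mem_of_slice_nonempty hcomp hconv hs
    (hSPI.exists_sum_eq_sSup hne hcomp s)
  have hcard : #s = i := by simp [s, Fin.card_filter_val_lt, hiI]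
  exact ⟨lam, by simpa [s] using hmem, by rwa [hcard] at hlam⟩
end

section
/- Assume the uniform symmetric grid and let Θ ⊆ [θ̲, θ̄] be nonempty, compact and signed-permutation invariant, and let ψ̌ satisfy 0 ≤ ψ̌_{ij} ≤ z_j − z_{j−1} for all i ∈ [I], j ∈ [J]. Then the separation problem max over grid rectangles [z⁻,z⁺] of d'(ψ̌, [z⁻,z⁺]) − d̄(Θ, [z⁻,z⁺]) admits a maximizer [z⁻,z⁺] with z⁻ ≤ 0 ≤ z⁺ componentwise. -/
/-- Maximal ℓ1-distance from `Θ` to the box `[zm, zp]`. -/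
noncomputable def dbar (I : ℕ) (Θ : Set (Fin I → ℝ)) (zm zp : Fin I → ℝ) : ℝ :=
  sSup ((fun θ => l1dist I θ zm zp) '' Θ)

/-- The linear distance `d'(ψ̌, [z⁻, z⁺])` for the uniform grid. -/
noncomputable def dlinU (I J : ℕ) (z : ℕ → ℝ) (ψ : Fin I → Fin J → ℝ)
    (zm zp : Fin I → ℝ) : ℝ :=
  ∑ i, ((∑ j ∈ Finset.univ.filter (fun j : Fin J => zp i < z (j.val + 1)), ψ i j)
    + zm i - z 0
    - ∑ j ∈ Finset.univ.filter (fun j : Fin J => z (j.val + 1) ≤ zm i), ψ i j)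

/-- `[zm, zp]` is a grid rectangle for the uniform grid. -/
def GridRectU (I J : ℕ) (z : ℕ → ℝ) (zm zp : Fin I → ℝ) : Prop :=
  zm ≤ zp ∧ (∀ i, ∃ k ≤ J, zm i = z k) ∧ (∀ i, ∃ k ≤ J, zp i = z k)

/-!
Clamp a maximizing grid rectangle to `[min z⁻ 0, max z⁺ 0]`; it stays a grid rectangle because
`z_{J/2} = 0`. Moving the endpoints by a total of `δ` changes `d'` by at most `δ`: for the lower
endpoints because `ψ̌ ≥ 0`, for the upper ones because `ψ̌_{ij} ≤ z_{j+1} - z_j` telescopes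
over the grid cells crossed. It lowers `d̄` by at least `δ`: by sign invariance a worst point of
`Θ` for the clamped box may be reflected, coordinate by coordinate, to the far side of `0`, where
its distance to the original box exceeds its distance to the clamped one by the amount moved.
-/

open Finset

noncomputable def intervalDist (a b t : ℝ) : ℝ := max (a - t) (max (t - b) 0)

lemma abs_sub_max_min_eq_intervalDist {a b : ℝ} (hab : a ≤ b) (t : ℝ) :
    |t - max a (min t b)| = intervalDist a b t := by
  unfold intervalDist
  rcases le_total t a with hta | hat
  · rw [min_eq_left (hta.trans hab), max_eq_left hta, abs_of_nonpos (by linarith),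
      max_eq_left (max_le (by linarith) (by linarith))]
    ring
  rcases le_total t b with htb | hbt
  · rw [min_eq_left htb, max_eq_right hat, sub_self, abs_zero,
      max_eq_right (by linarith : t - b ≤ 0), max_eq_right (by linarith : a - t ≤ 0)]
  · rw [min_eq_right hbt, max_eq_right hab, abs_of_nonneg (by linarith),
      max_eq_left (by linarith : 0 ≤ t - b), max_eq_right (by linarith)]

lemma sub_le_intervalDist_left (a b t : ℝ) : a - t ≤ intervalDist a b t := le_max_left _ _

lemma sub_le_intervalDist_right (a b t : ℝ) : t - b ≤ intervalDist a b t :=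
  (le_max_left _ _).trans (le_max_right _ _)

lemma intervalDist_le_abs_sub {a b t t' : ℝ} (ht' : t' ∈ Set.Icc a b) :
    intervalDist a b t ≤ |t - t'| :=
  max_le (by linarith [neg_abs_le (t - t'), ht'.1])
    (max_le (by linarith [le_abs_self (t - t'), ht'.2]) (abs_nonneg _))

lemma intervalDist_le_abs {a b : ℝ} (ha : a ≤ 0) (hb : 0 ≤ b) (t : ℝ) :
    intervalDist a b t ≤ |t| := by
  simpa using intervalDist_le_abs_sub (t := t) ⟨ha, hb⟩

lemma exists_abs_eq_intervalDist_add_le {a b : ℝ} (hab : a ≤ b) (t : ℝ) :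
    ∃ t', |t'| = |t| ∧ intervalDist (min a 0) (max b 0) t + ((a - min a 0) + (max b 0 - b))
      ≤ intervalDist a b t' := by
  rcases lt_or_ge 0 a with ha | ha
  · refine ⟨-|t|, by simp, ?_⟩
    rw [min_eq_right ha.le, max_eq_left (by linarith)]
    linarith [intervalDist_le_abs le_rfl (ha.le.trans hab) t, sub_le_intervalDist_left a b (-|t|)]
  rcases lt_or_ge b 0 with hb | hb
  · refine ⟨|t|, abs_abs t, ?_⟩
    rw [min_eq_left ha, max_eq_right hb.le]
    linarith [intervalDist_le_abs ha le_rfl t, sub_le_intervalDist_right a b |t|]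
  · exact ⟨t, rfl, by simp [min_eq_left ha, max_eq_left hb]⟩

noncomputable def boxDist {ι : Type*} [Fintype ι] (a b θ : ι → ℝ) : ℝ :=
  ∑ i, intervalDist (a i) (b i) (θ i)

lemma continuous_boxDist {ι : Type*} [Fintype ι] (a b : ι → ℝ) :
    Continuous (boxDist a b) := by
  unfold boxDist intervalDist
  fun_prop

section Dbar

variable {I : ℕ} {Θ : Set (Fin I → ℝ)} {a b : Fin I → ℝ}

lemma l1dist_eq_boxDist (θ : Fin I → ℝ) (hab : a ≤ b) :
    l1dist I θ a b = boxDist a b θ := by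
  refine IsLeast.csInf_eq ⟨⟨fun i => max (a i) (min (θ i) (b i)),
    ⟨fun i => le_max_left _ _, fun i => max_le (hab i) (min_le_right _ _)⟩, ?_⟩, ?_⟩
  · exact sum_congr rfl fun i _ => abs_sub_max_min_eq_intervalDist (hab i) (θ i)
  · rintro _ ⟨θ', hθ', rfl⟩
    exact sum_le_sum fun i _ => intervalDist_le_abs_sub ⟨hθ'.1 i, hθ'.2 i⟩

lemma dbar_eq_sSup (hab : a ≤ b) : dbar I Θ a b = sSup (boxDist a b '' Θ) := by
  unfold dbar
  rw [Set.image_congr fun θ _ => l1dist_eq_boxDist θ hab]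

lemma boxDist_le_dbar (hab : a ≤ b) (hcomp : IsCompact Θ) {θ : Fin I → ℝ}
    (hθ : θ ∈ Θ) :
    boxDist a b θ ≤ dbar I Θ a b := by
  rw [dbar_eq_sSup hab]
  exact le_csSup (hcomp.image (continuous_boxDist a b)).bddAbove ⟨θ, hθ, rfl⟩

lemma exists_dbar_eq_boxDist (hab : a ≤ b) (hne : Θ.Nonempty) (hcomp : IsCompact Θ) :
    ∃ θ ∈ Θ, dbar I Θ a b = boxDist a b θ := by
  obtain ⟨θ, hθ, hmax⟩ := hcomp.exists_isMaxOn hne (continuous_boxDist a b).continuousOn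
  refine ⟨θ, hθ, ?_⟩
  rw [dbar_eq_sSup hab]
  exact IsGreatest.csSup_eq ⟨⟨θ, hθ, rfl⟩, by rintro _ ⟨φ, hφ, rfl⟩; exact hmax hφ⟩

lemma SignedPermInvariant.mem_of_abs_eq (hΘ : SignedPermInvariant I Θ) {θ θ' : Fin I → ℝ}
    (hθ : θ ∈ Θ) (habs : ∀ i, |θ' i| = |θ i|) : θ' ∈ Θ := by
  classical
  convert hΘ (Equiv.refl _) (fun i => if θ' i = θ i then 1 else -1)
    (fun i => by split_ifs <;> simp) θ hθ using 1
  ext i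
  by_cases h : θ' i = θ i
  · simp [h]
  · simpa [h] using (abs_eq_abs.mp (habs i)).resolve_left h

/-- Reflect a worst point of `Θ` for the clamped box, coordinate by coordinate, away from the
moved endpoints. -/
lemma dbar_clamp_add_le_dbar (hΘ : SignedPermInvariant I Θ) (hne : Θ.Nonempty)
    (hcomp : IsCompact Θ) (hab : a ≤ b) :
    dbar I Θ (fun i => min (a i) 0) (fun i => max (b i) 0)
        + ∑ i, ((a i - min (a i) 0) + (max (b i) 0 - b i)) ≤ dbar I Θ a b := by
  have hab' : (fun i => min (a i) 0) ≤ fun i => max (b i) 0 :=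
    fun i => (min_le_right _ _).trans (le_max_right _ _)
  obtain ⟨θ, hθ, hθmax⟩ := exists_dbar_eq_boxDist hab' hne hcomp
  choose θ' habs hθ' using fun i => exists_abs_eq_intervalDist_add_le (hab i) (θ i)
  calc _ = ∑ i, (intervalDist (min (a i) 0) (max (b i) 0) (θ i)
          + ((a i - min (a i) 0) + (max (b i) 0 - b i))) := by
        rw [hθmax, boxDist]
        exact sum_add_distrib.symm
    _ ≤ boxDist a b θ' := sum_le_sum fun i _ => hθ' i
    _ ≤ dbar I Θ a b := boxDist_le_dbar hab hcomp (hΘ.mem_of_abs_eq hθ habs)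

end Dbar

section GridSums

variable {J : ℕ} {z : ℕ → ℝ} {ψ : Fin J → ℝ}

lemma sum_filter_le_mono (hψ : ∀ j, 0 ≤ ψ j) {x y : ℝ} (hxy : x ≤ y) :
    ∑ j ∈ univ.filter (fun j : Fin J => z (j.val + 1) ≤ x), ψ j
      ≤ ∑ j ∈ univ.filter (fun j : Fin J => z (j.val + 1) ≤ y), ψ j :=
  sum_le_sum_of_subset_of_nonneg
    (fun j hj => by simp only [mem_filter] at hj ⊢; exact ⟨hj.1, hj.2.trans hxy⟩)
    fun j _ _ => hψ j

lemma sum_filter_le_val_le_add (hψ : ∀ j : Fin J, ψ j ≤ z (j.val + 1) - z j.val) {k m : ℕ}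
    (hkm : k ≤ m) (hmJ : m ≤ J) :
    ∑ j ∈ univ.filter (fun j : Fin J => k ≤ j.val), ψ j
      ≤ ∑ j ∈ univ.filter (fun j : Fin J => m ≤ j.val), ψ j + (z m - z k) := by
  induction m, hkm using Nat.le_induction with
  | base => simp
  | succ n _ ih =>
    have hn : n < J := by omega
    have hsplit : univ.filter (fun j : Fin J => n ≤ j.val)
        = insert ⟨n, hn⟩ (univ.filter (fun j : Fin J => n + 1 ≤ j.val)) := by
      ext j
      simp only [mem_filter, mem_univ, true_and, mem_insert, Fin.ext_iff]
      omega
    rw [hsplit, sum_insert (by simp)] at ih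
    linarith [ih hn.le, hψ ⟨n, hn⟩]

lemma sum_filter_lt_le_add (hz : StrictMonoOn z (Set.Iic J))
    (hψ : ∀ j : Fin J, ψ j ≤ z (j.val + 1) - z j.val) {k m : ℕ} (hk : k ≤ J)
    (hm : m ≤ J) (hkm : z k ≤ z m) :
    ∑ j ∈ univ.filter (fun j : Fin J => z k < z (j.val + 1)), ψ j
      ≤ ∑ j ∈ univ.filter (fun j : Fin J => z m < z (j.val + 1)), ψ j + (z m - z k) := by
  have hindex : ∀ n ≤ J, univ.filter (fun j : Fin J => z n < z (j.val + 1))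
      = univ.filter (fun j : Fin J => n ≤ j.val) := fun n hn =>
    filter_congr fun j _ => (hz.lt_iff_lt hn j.isLt).trans Nat.lt_succ_iff
  rw [hindex k hk, hindex m hm]
  exact sum_filter_le_val_le_add hψ ((hz.le_iff_le hk hm).1 hkm) hm

end GridSums

section Clamp

variable {I J : ℕ} {z : ℕ → ℝ} {a b : Fin I → ℝ} {m : ℕ}

lemma GridRectU.clamp_zero (h : GridRectU I J z a b) (hm : m ≤ J) (hzm : z m = 0) :
    GridRectU I J z (fun i => min (a i) 0) (fun i => max (b i) 0) := by
  refine ⟨fun i => (min_le_right _ _).trans (le_max_right _ _), fun i => ?_, fun i => ?_⟩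
  · dsimp only
    rcases min_choice (a i) 0 with h' | h' <;> rw [h']
    exacts [h.2.1 i, ⟨m, hm, hzm.symm⟩]
  · dsimp only
    rcases max_choice (b i) 0 with h' | h' <;> rw [h']
    exacts [h.2.2 i, ⟨m, hm, hzm.symm⟩]

lemma dlinU_sub_clamp_le (hz : StrictMonoOn z (Set.Iic J)) {ψ : Fin I → Fin J → ℝ}
    (hψ : ∀ i j, 0 ≤ ψ i j ∧ ψ i j ≤ z (j.val + 1) - z j.val) (hm : m ≤ J)
    (hzm : z m = 0) (hb : ∀ i, ∃ k ≤ J, b i = z k) :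
    dlinU I J z ψ a b - dlinU I J z ψ (fun i => min (a i) 0) (fun i => max (b i) 0)
      ≤ ∑ i, ((a i - min (a i) 0) + (max (b i) 0 - b i)) := by
  unfold dlinU
  rw [← sum_sub_distrib]
  refine sum_le_sum fun i _ => ?_
  have hupper : ∑ j ∈ univ.filter (fun j : Fin J => b i < z (j.val + 1)), ψ i j
      ≤ ∑ j ∈ univ.filter (fun j : Fin J => max (b i) 0 < z (j.val + 1)), ψ i j
        + (max (b i) 0 - b i) := by
    rcases le_total (b i) 0 with hb0 | hb0
    · obtain ⟨k, hk, hbk⟩ := hb i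
      have := sum_filter_lt_le_add hz (fun j => (hψ i j).2) hk hm (by rwa [hzm, ← hbk])
      rwa [hzm, ← hbk, ← max_eq_right hb0] at this
    · simp [max_eq_left hb0]
  have hlower := sum_filter_le_mono (z := z) (fun j => (hψ i j).1) (min_le_left (a i) 0)
  linarith

end Clamp

lemma exists_forall_gridRectU_le (I J : ℕ) (z : ℕ → ℝ)
    (f : (Fin I → ℝ) → (Fin I → ℝ) → ℝ) :
    ∃ a b, GridRectU I J z a b ∧ ∀ a' b', GridRectU I J z a' b' → f a' b' ≤ f a b := by
  have hgrid : (Set.univ.pi fun _ : Fin I => z '' Set.Iic J).Finite :=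
    Set.Finite.pi fun _ => (Set.finite_Iic J).image z
  have hfin : {p : (Fin I → ℝ) × (Fin I → ℝ) | GridRectU I J z p.1 p.2}.Finite :=
    (hgrid.prod hgrid).subset fun p hp =>
      ⟨fun i _ => (hp.2.1 i).imp fun _ h => ⟨h.1, h.2.symm⟩,
        fun i _ => (hp.2.2 i).imp fun _ h => ⟨h.1, h.2.symm⟩⟩
  obtain ⟨⟨a, b⟩, hab, hmax⟩ := Set.exists_max_image _ (fun p => f p.1 p.2) hfin
    ⟨(fun _ => z 0, fun _ => z 0), le_rfl, fun _ => ⟨0, Nat.zero_le _, rfl⟩,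
      fun _ => ⟨0, Nat.zero_le _, rfl⟩⟩
  exact ⟨a, b, hab, fun a' b' h' => hmax (a', b') h'⟩

theorem stmt_12_general (I J : ℕ) (hJeven : Even J)
    (z : ℕ → ℝ) (hz : ∀ j < J, z j < z (j + 1))
    (hsym : ∀ j ≤ J, z j = -(z (J - j)))
    (Θ : Set (Fin I → ℝ)) (hne : Θ.Nonempty) (hcomp : IsCompact Θ)
    (hSPI : SignedPermInvariant I Θ)
    (ψ : Fin I → Fin J → ℝ)
    (hψ : ∀ i j, 0 ≤ ψ i j ∧ ψ i j ≤ z (j.val + 1) - z j.val) :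
    ∃ zm zp : Fin I → ℝ, GridRectU I J z zm zp ∧
      (∀ i, zm i ≤ 0 ∧ 0 ≤ zp i) ∧
      ∀ zm' zp' : Fin I → ℝ, GridRectU I J z zm' zp' →
        dlinU I J z ψ zm' zp' - dbar I Θ zm' zp' ≤
          dlinU I J z ψ zm zp - dbar I Θ zm zp := by
  obtain ⟨m, rfl⟩ := hJeven
  have hm : m ≤ m + m := Nat.le_add_left m m
  have hzm : z m = 0 := by
    have := hsym m hm
    rw [Nat.add_sub_cancel] at this
    linarith
  obtain ⟨a, b, hab, hmax⟩ := exists_forall_gridRectU_le I (m + m) z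
    fun a b => dlinU I (m + m) z ψ a b - dbar I Θ a b
  refine ⟨fun i => min (a i) 0, fun i => max (b i) 0, hab.clamp_zero hm hzm,
    fun i => ⟨min_le_right _ _, le_max_right _ _⟩, fun a' b' h' => (hmax a' b' h').trans ?_⟩
  have hdlin := dlinU_sub_clamp_le (a := a) (strictMonoOn_Iic_of_lt_succ hz) hψ hm hzm hab.2.2
  have hdbar := dbar_clamp_add_le_dbar hSPI hne hcomp hab.1
  linarith

theorem stmt_12 (I J : ℕ) (hJeven : Even J) (hJpos : 0 < J)
    (z : ℕ → ℝ) (hz : ∀ j < J, z j < z (j + 1))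
    (hsym : ∀ j ≤ J, z j = -(z (J - j)))
    (Θ : Set (Fin I → ℝ)) (hne : Θ.Nonempty) (hcomp : IsCompact Θ)
    (hSPI : SignedPermInvariant I Θ)
    (hΘbox : Θ ⊆ Set.Icc (fun _ => z 0) (fun _ => z J))
    (ψ : Fin I → Fin J → ℝ)
    (hψ : ∀ i j, 0 ≤ ψ i j ∧ ψ i j ≤ z (j.val + 1) - z j.val) :
    ∃ zm zp : Fin I → ℝ, GridRectU I J z zm zp ∧
      (∀ i, zm i ≤ 0 ∧ 0 ≤ zp i) ∧
      ∀ zm' zp' : Fin I → ℝ, GridRectU I J z zm' zp' →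
        dlinU I J z ψ zm' zp' - dbar I Θ zm' zp' ≤
          dlinU I J z ψ zm zp - dbar I Θ zm zp :=
  stmt_12_general I J hJeven z hz hsym Θ hne hcomp hSPI ψ hψ
end

section
/- Assume the uniform symmetric grid and let Θ ⊆ [θ̲, θ̄] be nonempty, compact and signed-permutation invariant, and let ψ̌ satisfy 0 ≤ ψ̌_{ij} ≤ z_j − z_{j−1} for all i ∈ [I], j ∈ [J]. Then the separation problem max over grid rectangles [z⁻,z⁺] of d'(ψ̌, [z⁻,z⁺]) − d̄(Θ, [z⁻,z⁺]) admits a maximizer that is symmetric around the origin, i.e., a maximizer with z⁻ = −z⁺. -/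
/-!
Each coordinate of the objective separates. On a grid box `[a, b]` the linear part is, up to a
constant, `a - F a - F b`, where `F x` is the `ψ̌`-mass of the grid cells lying below `x`; `F` is
monotone because `ψ̌ ≥ 0`, and `x ↦ x - F x` is monotone on grid points because `ψ̌` never exceeds
the cell length. Replace `[a, b]` by `[-c, c]` with `c = max 0 (min (-a) b)`. This raises the linear
part by at most `r = d(0, [a, b])`, while `d(t, [-c, c]) + r ≤ max (d(t, [a, b]), d(-t, [a, b]))`.
Flipping the signs of the coordinates of `θ ∈ Θ` realises that maximum inside `Θ`, so `d̄` drops by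
at least `∑ r`. Hence every grid box is beaten by a symmetric one, and among the finitely many
symmetric grid boxes one is a maximizer.
-/

open Finset

def distIcc (a b t : ℝ) : ℝ := max (a - t) 0 + max (t - b) 0

/-- Half-width of the largest origin-centred interval inside `[a, b]`, or `0` if `0 ∉ [a, b]`. -/
def symmRadius (a b : ℝ) : ℝ := max 0 (min (-a) b)

lemma symmRadius_nonneg (a b : ℝ) : 0 ≤ symmRadius a b := le_max_left _ _

lemma symmRadius_mem {S : Set ℝ} (hS0 : (0 : ℝ) ∈ S) (hSneg : ∀ x ∈ S, -x ∈ S) {a b : ℝ}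
    (ha : a ∈ S) (hb : b ∈ S) : symmRadius a b ∈ S := by
  unfold symmRadius
  rcases max_choice 0 (min (-a) b) with h | h <;> rw [h]
  · exact hS0
  · rcases min_choice (-a) b with h' | h' <;> rw [h']
    · exact hSneg a ha
    · exact hb

lemma abs_sub_clamp {a b : ℝ} (hab : a ≤ b) (t : ℝ) :
    |t - max a (min t b)| = distIcc a b t := by
  unfold distIcc
  grind

lemma distIcc_le_abs_sub {a b x : ℝ} (hx : x ∈ Set.Icc a b) (t : ℝ) :
    distIcc a b t ≤ |t - x| := by
  obtain ⟨hax, hxb⟩ := hx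
  unfold distIcc
  grind

lemma distIcc_symmRadius_add_le {a b : ℝ} (hab : a ≤ b) (t : ℝ) :
    distIcc (-symmRadius a b) (symmRadius a b) t + distIcc a b 0 ≤
      max (distIcc a b t) (distIcc a b (-t)) := by
  unfold distIcc symmRadius
  grind

lemma sub_sub_le_symmRadius {S : Set ℝ} {F : ℝ → ℝ} (hF : Monotone F)
    (hG : MonotoneOn (fun x => x - F x) S) (hS0 : (0 : ℝ) ∈ S) (hSneg : ∀ x ∈ S, -x ∈ S)
    {a b : ℝ} (ha : a ∈ S) (hb : b ∈ S) (hab : a ≤ b) :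
    a - F a - F b ≤
      -symmRadius a b - F (-symmRadius a b) - F (symmRadius a b) + distIcc a b 0 := by
  unfold symmRadius distIcc
  rcases le_total b 0 with hb0 | hb0
  · have h1 := hG ha hS0 (hab.trans hb0)
    have h2 := hG hb hS0 hb0
    rw [min_eq_right (by linarith), max_eq_left hb0]
    grind
  rcases le_total 0 a with ha0 | ha0
  · have h1 := hF ha0
    have h2 := hF hb0
    rw [min_eq_left (by linarith), max_eq_left (by linarith)]
    grind
  rcases le_total (-a) b with hc | hc
  · have h1 := hF hc
    rw [min_eq_left hc, max_eq_right (by linarith)]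
    grind
  · have h1 := hG ha (hSneg b hb) (by linarith)
    rw [min_eq_right hc, max_eq_right hb0]
    grind

lemma l1dist_eq_sum_distIcc {I : ℕ} (θ : Fin I → ℝ) {zm zp : Fin I → ℝ} (h : zm ≤ zp) :
    l1dist I θ zm zp = ∑ i, distIcc (zm i) (zp i) (θ i) := by
  refine IsLeast.csInf_eq ⟨⟨fun i => max (zm i) (min (θ i) (zp i)), ?_, ?_⟩, ?_⟩
  · exact ⟨fun i => le_max_left _ _, fun i => max_le (h i) (min_le_right _ _)⟩
  · exact sum_congr rfl fun i _ => abs_sub_clamp (h i) (θ i)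
  · rintro _ ⟨x, hx, rfl⟩
    exact sum_le_sum fun i _ => distIcc_le_abs_sub ⟨hx.1 i, hx.2 i⟩ (θ i)

lemma SignedPermInvariant.exists_mem_forall_eq_max {I : ℕ} {Θ : Set (Fin I → ℝ)}
    (hΘ : SignedPermInvariant I Θ) {θ : Fin I → ℝ} (hθ : θ ∈ Θ) (f : Fin I → ℝ → ℝ) :
    ∃ θ' ∈ Θ, ∀ i, f i (θ' i) = max (f i (θ i)) (f i (-θ i)) := by
  classical
  let ε : Fin I → ℝ := fun i => if f i (θ i) ≤ f i (-θ i) then -1 else 1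
  refine ⟨fun i => ε i * θ i, hΘ (Equiv.refl _) ε (fun i => ?_) θ hθ, fun i => ?_⟩
  · unfold ε
    split_ifs <;> simp
  · dsimp only [ε]
    split_ifs with h
    · simp [max_eq_right h]
    · simp [max_eq_left (le_of_not_ge h)]

lemma dbar_add_sum_le {I : ℕ} {Θ : Set (Fin I → ℝ)} (hne : Θ.Nonempty) (hcomp : IsCompact Θ)
    (hSPI : SignedPermInvariant I Θ) {zm zp ym yp : Fin I → ℝ} (hz : zm ≤ zp) (hy : ym ≤ yp)
    (r : Fin I → ℝ) (h : ∀ i t, distIcc (ym i) (yp i) t + r i ≤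
      max (distIcc (zm i) (zp i) t) (distIcc (zm i) (zp i) (-t))) :
    dbar I Θ ym yp + ∑ i, r i ≤ dbar I Θ zm zp := by
  have hbdd : BddAbove ((fun θ => l1dist I θ zm zp) '' Θ) := by
    simp only [l1dist_eq_sum_distIcc _ hz]
    exact hcomp.bddAbove_image (by unfold distIcc; fun_prop)
  rw [← le_sub_iff_add_le]
  refine csSup_le (hne.image _) ?_
  rintro _ ⟨θ, hθ, rfl⟩
  dsimp only
  obtain ⟨θ', hθ', hmax⟩ := hSPI.exists_mem_forall_eq_max hθ fun i => distIcc (zm i) (zp i)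
  rw [le_sub_iff_add_le, l1dist_eq_sum_distIcc θ hy, ← sum_add_distrib]
  calc ∑ i, (distIcc (ym i) (yp i) (θ i) + r i)
      ≤ ∑ i, distIcc (zm i) (zp i) (θ' i) := sum_le_sum fun i _ => (hmax i).symm ▸ h i (θ i)
    _ = l1dist I θ' zm zp := (l1dist_eq_sum_distIcc θ' hz).symm
    _ ≤ dbar I Θ zm zp := le_csSup hbdd ⟨θ', hθ', rfl⟩

/-- The function `F` above: the total weight of the grid cells `(z j, z (j + 1)]` below `x`. -/
noncomputable def cumWeight {J : ℕ} (z : ℕ → ℝ) (w : Fin J → ℝ) (x : ℝ) : ℝ :=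
  ∑ j ∈ univ.filter (fun j : Fin J => z (j + 1) ≤ x), w j

def gridPts (J : ℕ) (z : ℕ → ℝ) : Set ℝ := {x | ∃ k ≤ J, x = z k}

section Grid

variable {J : ℕ} {z : ℕ → ℝ}

lemma gridPts_finite : (gridPts J z).Finite :=
  ((Set.finite_Iic J).image z).subset fun _ ⟨k, hk, hx⟩ => ⟨k, hk, hx.symm⟩

lemma cumWeight_mono {w : Fin J → ℝ} (hw : 0 ≤ w) : Monotone (cumWeight z w) :=
  fun _ _ hxy => sum_le_sum_of_subset_of_nonneg
    (monotone_filter_right _ fun _ _ h => h.trans hxy) fun j _ _ => hw j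

lemma cumWeight_sub (v w : Fin J → ℝ) (x : ℝ) :
    cumWeight z (v - w) x = cumWeight z v x - cumWeight z w x :=
  sum_sub_distrib _ _

lemma cumWeight_cellLength (hz : StrictMonoOn z (Set.Iic J)) {k : ℕ} (hk : k ≤ J) :
    cumWeight z (fun j : Fin J => z (j + 1) - z j) (z k) = z k - z 0 := by
  have hfilter : ∀ j : Fin J, z (j + 1) ≤ z k ↔ (j : ℕ) < k := fun j =>
    (hz.le_iff_le (Set.mem_Iic.2 (by omega)) (Set.mem_Iic.2 hk)).trans Nat.succ_le_iff
  have hrange : (range J).filter (· < k) = range k := by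
    ext n
    simp only [mem_filter, mem_range]
    omega
  rw [cumWeight, filter_congr fun j _ => hfilter j, sum_filter,
    Fin.sum_univ_eq_sum_range (fun n => if n < k then z (n + 1) - z n else 0), ← sum_filter,
    hrange, sum_range_sub]

lemma monotoneOn_sub_cumWeight (hz : StrictMonoOn z (Set.Iic J)) {ψ : Fin J → ℝ}
    (hψ : ∀ j : Fin J, ψ j ≤ z (j + 1) - z j) :
    MonotoneOn (fun x => x - cumWeight z ψ x) (gridPts J z) := by
  have hgrid : ∀ k ≤ J, z k - cumWeight z ψ (z k) =
      z 0 + cumWeight z ((fun j : Fin J => z (j + 1) - z j) - ψ) (z k) := fun k hk => by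
    rw [cumWeight_sub, cumWeight_cellLength hz hk]
    ring
  rintro _ ⟨k, hk, rfl⟩ _ ⟨l, hl, rfl⟩ hkl
  simp only [hgrid k hk, hgrid l hl, add_le_add_iff_left]
  exact cumWeight_mono (fun j => sub_nonneg.2 (hψ j)) hkl

lemma dlinU_eq_sum_cumWeight (I : ℕ) (ψ : Fin I → Fin J → ℝ) (zm zp : Fin I → ℝ) :
    dlinU I J z ψ zm zp = ∑ i, (∑ j, ψ i j - z 0 + zm i
      - cumWeight z (ψ i) (zm i) - cumWeight z (ψ i) (zp i)) := by
  refine sum_congr rfl fun i _ => ?_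
  rw [← sum_filter_not_add_sum_filter univ (fun j : Fin J => z (j + 1) ≤ zp i)]
  simp only [not_le, cumWeight]
  ring

lemma dlinU_sub_dbar_le_symmRadius {I : ℕ} (hz : StrictMonoOn z (Set.Iic J))
    (hS0 : (0 : ℝ) ∈ gridPts J z) (hSneg : ∀ x ∈ gridPts J z, -x ∈ gridPts J z)
    {Θ : Set (Fin I → ℝ)} (hne : Θ.Nonempty) (hcomp : IsCompact Θ)
    (hSPI : SignedPermInvariant I Θ) {ψ : Fin I → Fin J → ℝ}
    (hψ : ∀ i j, 0 ≤ ψ i j ∧ ψ i j ≤ z (j.val + 1) - z j.val)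
    {zm zp : Fin I → ℝ} (hrect : GridRectU I J z zm zp) :
    let c := fun i => symmRadius (zm i) (zp i)
    dlinU I J z ψ zm zp - dbar I Θ zm zp ≤ dlinU I J z ψ (-c) c - dbar I Θ (-c) c := by
  intro c
  obtain ⟨hle, hm, hp⟩ := hrect
  have hlin : dlinU I J z ψ zm zp ≤
      dlinU I J z ψ (-c) c + ∑ i, distIcc (zm i) (zp i) 0 := by
    rw [dlinU_eq_sum_cumWeight, dlinU_eq_sum_cumWeight, ← sum_add_distrib]
    refine sum_le_sum fun i _ => ?_
    have := sub_sub_le_symmRadius (cumWeight_mono fun j => (hψ i j).1)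
      (monotoneOn_sub_cumWeight hz fun j => (hψ i j).2) hS0 hSneg (hm i) (hp i) (hle i)
    simp only [Pi.neg_apply, c]
    linarith
  have hdist := dbar_add_sum_le (ym := -c) (yp := c) hne hcomp hSPI hle
    (fun i => neg_le_self (symmRadius_nonneg (zm i) (zp i))) _
    fun i t => distIcc_symmRadius_add_le (hle i) t
  linarith

end Grid

theorem stmt_13_general (I J : ℕ) (hJeven : Even J)
    (z : ℕ → ℝ) (hz : ∀ j < J, z j < z (j + 1))
    (hsym : ∀ j ≤ J, z j = -(z (J - j)))
    (Θ : Set (Fin I → ℝ)) (hne : Θ.Nonempty) (hcomp : IsCompact Θ)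
    (hSPI : SignedPermInvariant I Θ)
    (ψ : Fin I → Fin J → ℝ)
    (hψ : ∀ i j, 0 ≤ ψ i j ∧ ψ i j ≤ z (j.val + 1) - z j.val) :
    ∃ zm zp : Fin I → ℝ, GridRectU I J z zm zp ∧
      (∀ i, zm i = -(zp i)) ∧
      ∀ zm' zp' : Fin I → ℝ, GridRectU I J z zm' zp' →
        dlinU I J z ψ zm' zp' - dbar I Θ zm' zp' ≤
          dlinU I J z ψ zm zp - dbar I Θ zm zp := by
  have hzmono : StrictMonoOn z (Set.Iic J) := strictMonoOn_Iic_of_lt_succ hz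
  have hSneg : ∀ x ∈ gridPts J z, -x ∈ gridPts J z := by
    rintro _ ⟨k, hk, rfl⟩
    exact ⟨J - k, J.sub_le k, by rw [hsym k hk, neg_neg]⟩
  have hS0 : (0 : ℝ) ∈ gridPts J z := by
    obtain ⟨h, rfl⟩ := hJeven
    refine ⟨h, by omega, ?_⟩
    have := hsym h (by omega)
    rw [show h + h - h = h by omega] at this
    linarith
  let radii := Set.univ.pi fun _ : Fin I => gridPts J z ∩ Set.Ici 0
  have hfin : radii.Finite := Set.Finite.pi fun _ => gridPts_finite.inter_of_left _
  obtain ⟨c, hc, hmax⟩ := radii.exists_max_image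
    (fun c => dlinU I J z ψ (-c) c - dbar I Θ (-c) c) hfin
    ⟨0, fun _ _ => ⟨hS0, Set.self_mem_Ici⟩⟩
  refine ⟨-c, c, ⟨fun i => neg_le_self (hc i trivial).2, fun i => hSneg _ (hc i trivial).1,
    fun i => (hc i trivial).1⟩, fun i => rfl, fun zm zp hrect => ?_⟩
  exact (dlinU_sub_dbar_le_symmRadius hzmono hS0 hSneg hne hcomp hSPI hψ hrect).trans
    (hmax _ fun i _ =>
      ⟨symmRadius_mem hS0 hSneg (hrect.2.1 i) (hrect.2.2 i), symmRadius_nonneg _ _⟩)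

theorem stmt_13 (I J : ℕ) (hJeven : Even J) (hJpos : 0 < J)
    (z : ℕ → ℝ) (hz : ∀ j < J, z j < z (j + 1))
    (hsym : ∀ j ≤ J, z j = -(z (J - j)))
    (Θ : Set (Fin I → ℝ)) (hne : Θ.Nonempty) (hcomp : IsCompact Θ)
    (hSPI : SignedPermInvariant I Θ)
    (hΘbox : Θ ⊆ Set.Icc (fun _ => z 0) (fun _ => z J))
    (ψ : Fin I → Fin J → ℝ)
    (hψ : ∀ i j, 0 ≤ ψ i j ∧ ψ i j ≤ z (j.val + 1) - z j.val) :
    ∃ zm zp : Fin I → ℝ, GridRectU I J z zm zp ∧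
      (∀ i, zm i = -(zp i)) ∧
      ∀ zm' zp' : Fin I → ℝ, GridRectU I J z zm' zp' →
        dlinU I J z ψ zm' zp' - dbar I Θ zm' zp' ≤
          dlinU I J z ψ zm zp - dbar I Θ zm zp :=
  stmt_13_general I J hJeven z hz hsym Θ hne hcomp hSPI ψ hψ
end

section
/- Let Θ ⊆ ℝ^I be nonempty, compact, convex, and signed-permutation invariant, and let z⁺ ∈ ℝ^I satisfy 0 ≤ z⁺_1 ≤ z⁺_2 ≤ … ≤ z⁺_I and z⁺_1 ≤ η(1). Then the maximal ℓ1-distance from Θ to the symmetric box [−z⁺, z⁺] admits the closed form d̄(Θ, [−z⁺, z⁺]) = max over i ∈ [I] of ( η(i) − Σ_{i'=1}^{i} z⁺_{i'} ). -/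
/-! Clamping `θ` into the box `[-z⁺, z⁺]` shows that its ℓ1-distance to the box is
`∑ᵢ (|θᵢ| - z⁺ᵢ)⁺`. If `S` is the set of the `k` coordinates where `|θᵢ| > z⁺ᵢ`, this is
`∑_S |θᵢ| - ∑_S z⁺ᵢ ≤ η(k) - ∑_{i ≤ k} z⁺ᵢ`: a permutation moves `S` onto the first `k`
coordinates, and `z⁺` is increasing. The case `k = 0` is covered by `z⁺₁ ≤ η(1)`. Conversely,
a maximizer of `η(i)` lies at distance at least `η(i) - ∑_{i' ≤ i} z⁺_{i'}` from the box. -/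

open Finset

theorem Fin.val_le_of_strictMono {k n : ℕ} {f : Fin k → Fin n} (hf : StrictMono f) (m : Fin k) :
    (m : ℕ) ≤ f m := by
  simpa using card_le_card_of_injOn f (s := Iio m) (t := Iio (f m))
    (fun x hx => by simpa using hf (by simpa using hx)) hf.injective.injOn

theorem Fin.filter_le_eq_filter_val_lt_succ {n : ℕ} (i : Fin n) :
    univ.filter (· ≤ i) = univ.filter fun j : Fin n => (j : ℕ) < i + 1 := by
  ext j
  simp only [mem_filter, mem_univ, true_and, Fin.le_def]
  omega

theorem Finset.exists_perm_sum_comp_eq {α M : Type*} [Fintype α] [DecidableEq α] [AddCommMonoid M]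
    {s t : Finset α} (h : #t = #s) (f : α → M) :
    ∃ σ : Equiv.Perm α, ∑ i ∈ t, f (σ i) = ∑ i ∈ s, f i := by
  let e : t ≃ s := Fintype.equivOfCardEq (by simpa using h)
  refine ⟨e.extendSubtype, ?_⟩
  calc ∑ i ∈ t, f (e.extendSubtype i) = ∑ x : t, f (e x) := by
        rw [← sum_coe_sort]
        exact sum_congr rfl fun x _ => congrArg f (e.extendSubtype_apply_of_mem x x.2)
    _ = ∑ i ∈ s, f i := by rw [e.sum_comp (fun y : s => f y), sum_coe_sort]

theorem Finset.sum_le_sum_max_zero {ι M : Type*} [Fintype ι] [AddCommMonoid M] [LinearOrder M]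
    [IsOrderedAddMonoid M] (s : Finset ι) (a : ι → M) :
    ∑ i ∈ s, a i ≤ ∑ i, max (a i) 0 :=
  (sum_le_sum fun _ _ => le_max_left _ _).trans
    (sum_le_sum_of_subset_of_nonneg (subset_univ s) fun _ _ _ => le_max_right _ _)

theorem Finset.sum_max_zero_eq_sum_filter {ι M : Type*} [Fintype ι] [AddCommMonoid M]
    [LinearOrder M] (a : ι → M) :
    ∑ i, max (a i) 0 = ∑ i ∈ univ.filter (fun i => 0 < a i), a i := by
  rw [sum_filter]
  refine sum_congr rfl fun _ _ => ?_
  split_ifs with h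
  · exact max_eq_left h.le
  · exact max_eq_right (not_lt.1 h)

theorem Monotone.sum_filter_val_lt_card_le {M : Type*} [AddCommMonoid M] [PartialOrder M]
    [IsOrderedAddMonoid M] {n : ℕ} {f : Fin n → M} (hf : Monotone f) (s : Finset (Fin n)) :
    ∑ j ∈ univ.filter (fun j : Fin n => (j : ℕ) < #s), f j ≤ ∑ i ∈ s, f i := by
  have hs : #s ≤ n := by simpa using card_le_univ s
  have hinit : univ.filter (fun j : Fin n => (j : ℕ) < #s) = univ.map (Fin.castLEEmb hs) := by
    ext j
    simpa [Fin.ext_iff] using ⟨fun h => ⟨⟨j, h⟩, rfl⟩, fun ⟨a, ha⟩ => ha ▸ a.2⟩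
  calc ∑ j ∈ univ.filter (fun j : Fin n => (j : ℕ) < #s), f j
        = ∑ m : Fin #s, f (Fin.castLE hs m) := by rw [hinit, sum_map]; rfl
    _ ≤ ∑ m : Fin #s, f (s.orderEmbOfFin rfl m) := sum_le_sum fun m _ =>
        hf (Fin.val_le_of_strictMono (s.orderEmbOfFin rfl).strictMono m)
    _ = ∑ i ∈ s, f i := by
      conv_rhs => rw [← s.map_orderEmbOfFin_univ rfl, sum_map]
      rfl

theorem abs_sub_clamp_eq {a z : ℝ} (hz : 0 ≤ z) :
    |a - max (-z) (min z a)| = max (|a| - z) 0 := by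
  simp only [abs_eq_max_neg, max_def, min_def]
  split_ifs <;> linarith

theorem l1dist_neg_self (I : ℕ) (θ : Fin I → ℝ) {zp : Fin I → ℝ} (hnn : ∀ i, 0 ≤ zp i) :
    l1dist I θ (fun i => -(zp i)) zp = ∑ i, max (|θ i| - zp i) 0 := by
  refine IsLeast.csInf_eq ⟨⟨fun i => max (-(zp i)) (min (zp i) (θ i)), ?_, ?_⟩, ?_⟩
  · exact ⟨fun i => le_max_left _ _, fun i => max_le (by linarith [hnn i]) (min_le_left _ _)⟩
  · exact sum_congr rfl fun i _ => abs_sub_clamp_eq (hnn i)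
  · rintro _ ⟨θ', hθ', rfl⟩
    refine sum_le_sum fun i _ => max_le ?_ (abs_nonneg _)
    have hθ'i : |θ' i| ≤ zp i := abs_le.2 ⟨hθ'.1 i, hθ'.2 i⟩
    linarith [abs_sub_abs_le_abs_sub (θ i) (θ' i)]

theorem dbar_neg_self (I : ℕ) (Θ : Set (Fin I → ℝ)) {zp : Fin I → ℝ} (hnn : ∀ i, 0 ≤ zp i) :
    dbar I Θ (fun i => -(zp i)) zp = sSup ((fun θ => ∑ i, max (|θ i| - zp i) 0) '' Θ) := by
  simp only [dbar, l1dist_neg_self I _ hnn]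

section

variable {I : ℕ} {Θ : Set (Fin I → ℝ)}

theorem continuous_sum_abs_filter_val_lt (k : ℕ) :
    Continuous fun θ : Fin I → ℝ => ∑ i ∈ univ.filter (fun i : Fin I => (i : ℕ) < k), |θ i| :=
  continuous_finsetSum _ fun i _ => (continuous_apply i).abs

theorem eta_zero (hne : Θ.Nonempty) : eta I Θ 0 = 0 := by
  simp [eta, hne.image_const]

theorem exists_mem_eta_eq (hcomp : IsCompact Θ) (hne : Θ.Nonempty) (k : ℕ) :
    ∃ θ ∈ Θ, ∑ i ∈ univ.filter (fun i : Fin I => (i : ℕ) < k), |θ i| = eta I Θ k :=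
  (hcomp.image (continuous_sum_abs_filter_val_lt k)).sSup_mem (hne.image _)

theorem sum_abs_le_eta (hcomp : IsCompact Θ) (hSPI : SignedPermInvariant I Θ) {θ : Fin I → ℝ}
    (hθ : θ ∈ Θ) (s : Finset (Fin I)) : ∑ i ∈ s, |θ i| ≤ eta I Θ #s := by
  have hcard : #(univ.filter fun j : Fin I => (j : ℕ) < #s) = #s := by
    rw [Fin.card_filter_val_lt, min_eq_right (by simpa using card_le_univ s)]
  obtain ⟨σ, hσ⟩ := exists_perm_sum_comp_eq hcard (|θ ·|)
  have hθσ : (fun i => 1 * θ (σ i)) ∈ Θ := hSPI σ 1 (fun _ => Or.inl rfl) θ hθ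
  rw [← hσ]
  exact le_csSup (hcomp.image (continuous_sum_abs_filter_val_lt #s)).bddAbove ⟨_, hθσ, by simp⟩

theorem exists_sum_max_zero_le_eta_sub (hcomp : IsCompact Θ) (hSPI : SignedPermInvariant I Θ)
    {zp : Fin I → ℝ} (hmono : Monotone zp) {θ : Fin I → ℝ} (hθ : θ ∈ Θ) :
    ∃ k ≤ I, ∑ i, max (|θ i| - zp i) 0 ≤
      eta I Θ k - ∑ j ∈ univ.filter (fun j : Fin I => (j : ℕ) < k), zp j := by
  set s := univ.filter fun i => 0 < |θ i| - zp i
  refine ⟨#s, by simpa using card_le_univ s, ?_⟩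
  rw [sum_max_zero_eq_sum_filter, sum_sub_distrib]
  exact sub_le_sub (sum_abs_le_eta hcomp hSPI hθ s) (hmono.sum_filter_val_lt_card_le s)

end

theorem stmt_14_general (I : ℕ) (hI : 0 < I) (Θ : Set (Fin I → ℝ))
    (hne : Θ.Nonempty) (hcomp : IsCompact Θ)
    (hSPI : SignedPermInvariant I Θ)
    (zp : Fin I → ℝ) (hnn : ∀ i, 0 ≤ zp i) (hmono : Monotone zp)
    (hfirst : zp ⟨0, hI⟩ ≤ eta I Θ 1) :
    dbar I Θ (fun i => -(zp i)) zp =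
      ⨆ i : Fin I, (eta I Θ ((i : ℕ) + 1) -
        ∑ i' ∈ Finset.univ.filter (fun i' : Fin I => i' ≤ i), zp i') := by
  have : Nonempty (Fin I) := ⟨⟨0, hI⟩⟩
  simp only [Fin.filter_le_eq_filter_val_lt_succ]
  rw [dbar_neg_self I Θ hnn]
  have hbdd := (Set.finite_range fun i : Fin I => eta I Θ (i + 1) -
    ∑ j ∈ univ.filter (fun j : Fin I => (j : ℕ) < i + 1), zp j).bddAbove
  refine le_antisymm (csSup_le (hne.image _) (Set.forall_mem_image.2 fun θ hθ => ?_))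
    (ciSup_le fun i => ?_)
  · obtain ⟨_ | k, hk, hθk⟩ := exists_sum_max_zero_le_eta_sub hcomp hSPI hmono hθ
    · calc ∑ i, max (|θ i| - zp i) 0 ≤ 0 := by simpa [eta_zero hne] using hθk
        _ ≤ eta I Θ 1 - ∑ j ∈ univ.filter (fun j : Fin I => (j : ℕ) < 1), zp j := by
          have hfilter : univ.filter (fun j : Fin I => (j : ℕ) < 1) = {⟨0, hI⟩} := by
            ext j; simp [Fin.ext_iff]
          rw [hfilter, sum_singleton]
          linarith
        _ ≤ _ := le_ciSup hbdd ⟨0, hI⟩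
    · exact hθk.trans (le_ciSup hbdd ⟨k, hk⟩)
  · obtain ⟨θ, hθ, hη⟩ := exists_mem_eta_eq hcomp hne (i + 1)
    rw [← hη, ← sum_sub_distrib]
    exact (sum_le_sum_max_zero _ _).trans (le_csSup (hcomp.image (by fun_prop)).bddAbove
      (Set.mem_image_of_mem _ hθ))

theorem stmt_14 (I : ℕ) (hI : 0 < I) (Θ : Set (Fin I → ℝ))
    (hne : Θ.Nonempty) (hcomp : IsCompact Θ) (hconv : Convex ℝ Θ)
    (hSPI : SignedPermInvariant I Θ)
    (zp : Fin I → ℝ) (hnn : ∀ i, 0 ≤ zp i) (hmono : Monotone zp)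
    (hfirst : zp ⟨0, hI⟩ ≤ eta I Θ 1) :
    dbar I Θ (fun i => -(zp i)) zp =
      ⨆ i : Fin I, (eta I Θ ((i : ℕ) + 1) -
        ∑ i' ∈ Finset.univ.filter (fun i' : Fin I => i' ≤ i), zp i') :=
  stmt_14_general I hI Θ hne hcomp hSPI zp hnn hmono hfirst
end
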